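/- arXiv:2106.08205 — 11 statements merged into one kernel-verified Lean document; each statement's English description precedes it below -/
import Mathlib

section
/- Let γ, μ, τ > 0 with γ·e^{−μτ} < μ. Then every complex number λ satisfying the characteristic equation γ·e^{−μτ}·e^{−λτ} − μ − λ = 0 has strictly negative real part. -/
/-- For `re λ ≥ 0` the delay term has modulus at most `‖a‖ < μ`, while `‖μ + λ‖ ≥ μ + re λ ≥ μ`. -/
theorem Complex.re_neg_of_mul_exp_neg_mul_eq_add {a : ℂ} {μ τ : ℝ} (hτ : 0 ≤ τ) (ha : ‖a‖ < μ)
    {l : ℂ} (hl : a * Complex.exp (-l * τ) = μ + l) : l.re < 0 := by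
  by_contra! hre
  have hdelay : ‖a * Complex.exp (-l * τ)‖ ≤ ‖a‖ := by
    rw [norm_mul, Complex.norm_exp]
    refine mul_le_of_le_one_right (norm_nonneg a) (Real.exp_le_one_iff.mpr ?_)
    simpa using mul_nonneg hre hτ
  have hshift : μ ≤ ‖(μ : ℂ) + l‖ :=
    calc μ ≤ ((μ : ℂ) + l).re := by simpa using hre
      _ ≤ ‖(μ : ℂ) + l‖ := Complex.re_le_norm _
  rw [hl] at hdelay
  linarith

theorem stmt_1_general (γ μ τ : ℝ) (hγ : 0 < γ) (hτ : 0 < τ)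
    (h : γ * Real.exp (-μ * τ) < μ) :
    ∀ l : ℂ, (γ * Real.exp (-μ * τ) : ℝ) * Complex.exp (-l * τ) - μ - l = 0 → l.re < 0 := by
  intro l hl
  have hnorm : ‖((γ * Real.exp (-μ * τ) : ℝ) : ℂ)‖ < μ := by
    rwa [Complex.norm_real, Real.norm_of_nonneg (by positivity)]
  exact Complex.re_neg_of_mul_exp_neg_mul_eq_add hτ.le hnorm (by linear_combination hl)

/-- If `γ e^{-μτ} < μ` (i.e. `R₀ < 1`), every root of the characteristic equation
`γ e^{-μτ} e^{-λτ} - μ - λ = 0` at the trivial equilibrium has negative real part. -/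
theorem stmt_1 (γ μ τ : ℝ) (hγ : 0 < γ) (hμ : 0 < μ) (hτ : 0 < τ)
    (h : γ * Real.exp (-μ * τ) < μ) :
    ∀ l : ℂ, (γ * Real.exp (-μ * τ) : ℝ) * Complex.exp (-l * τ) - μ - l = 0 → l.re < 0 :=
  stmt_1_general γ μ τ hγ hτ h
end

section
/- Let m > 0 and τ > 0. Then every nonzero complex number λ satisfying m·(e^{−λτ} − 1) = λ has strictly negative real part. -/
/-!
If `Re λ ≥ 0`, the equation rewritten as `λ + m = m e^{-λτ}` is impossible for `λ ≠ 0`: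
the right-hand side has modulus `m e^{-τ Re λ} ≤ m`, while adding the positive real `m` to a
nonzero number in the closed right half-plane strictly increases its modulus beyond `m`.
-/

lemma Complex.lt_norm_add_ofReal {z : ℂ} {m : ℝ} (hm : 0 < m) (hz : 0 ≤ z.re) (hz₀ : z ≠ 0) :
    m < ‖z + m‖ := by
  have hpos : 0 < z.re * z.re + z.im * z.im := by
    rw [← Complex.normSq_apply]
    exact Complex.normSq_pos.mpr hz₀
  have hsq : ‖z + m‖ ^ 2 = (z.re + m) ^ 2 + z.im ^ 2 := by
    rw [Complex.sq_norm, Complex.normSq_apply]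
    simp only [Complex.add_re, Complex.ofReal_re, Complex.add_im, Complex.ofReal_im, add_zero]
    ring
  nlinarith [norm_nonneg (z + m)]

lemma Complex.norm_exp_neg_mul_ofReal_le_one {z : ℂ} {τ : ℝ} (hz : 0 ≤ z.re) (hτ : 0 ≤ τ) :
    ‖Complex.exp (-z * τ)‖ ≤ 1 := by
  rw [Complex.norm_exp, Real.exp_le_one_iff]
  simpa using mul_nonneg hz hτ

/-- Every nonzero complex root of `m (e^{-λτ} - 1) = λ` with `m, τ > 0`
has strictly negative real part. -/
theorem stmt_3 (m τ : ℝ) (hm : 0 < m) (hτ : 0 < τ) :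
    ∀ l : ℂ, l ≠ 0 → (m : ℂ) * (Complex.exp (-l * τ) - 1) = l → l.re < 0 := by
  intro l hl heq
  by_contra! hre
  have hshift : l + (m : ℂ) = m * Complex.exp (-l * τ) := by linear_combination -heq
  have hle : ‖l + (m : ℂ)‖ ≤ m := by
    rw [hshift, norm_mul, Complex.norm_real, Real.norm_of_nonneg hm.le]
    exact mul_le_of_le_one_right hm.le (Complex.norm_exp_neg_mul_ofReal_le_one hre hτ.le)
  exact (Complex.lt_norm_add_ofReal hm hre hl).not_ge hle
end

section
/- Let γ, μ, κ, τ > 0. Let x : [−τ, ∞) → ℝ be continuous, positive on [−τ, 0], and differentiable on (0, ∞) with x'(t) = γ·x(t−τ)·exp(−μτ − κ∫_{t−τ}^{t} x(s) ds) − μ·x(t) − κ·x(t)² for all t > 0. If M is a constant with M > max_{t∈[−τ,0]} x(t) and γ·e^{−μτ} − μ − κM < 0, then 0 < x(t) < M for all t > 0. -/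
/-!
Let `c` be the first time after `0` at which the solution leaves `(0, M)`; then `x c = 0` or
`x c = M`, and on `[-τ, c)` the solution stays in `(0, M)`. If `x c = 0`, the right-hand side at
`c` reduces to the delayed birth term, which is positive because `x (c - τ) > 0`; but `x` decreases
to `0` from the left, so `x' c ≤ 0`. If `x c = M`, the integral is nonnegative and
`x (c - τ) < M`, so the right-hand side is at most `M (γ e^{-μτ} - μ - κM) < 0`; but `x` increases
to `M` from the left, so `x' c ≥ 0`.
-/

open Set Filter Topology

theorem exists_first_mem_frontier {f : ℝ → ℝ} {U : Set ℝ} {a b : ℝ} (hU : IsOpen U)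
    (hf : ContinuousOn f (Ici a)) (ha : f a ∈ U) (hab : a ≤ b) (hb : f b ∉ U) :
    ∃ c ∈ Ioc a b, f c ∈ frontier U ∧ ∀ t ∈ Ico a c, f t ∈ U := by
  set S := Ici a ∩ f ⁻¹' Uᶜ
  have hS_closed : IsClosed S := hf.preimage_isClosed_of_isClosed isClosed_Ici hU.isClosed_compl
  have hbS : b ∈ S := ⟨hab, hb⟩
  have hS_bdd : BddBelow S := ⟨a, fun t ht => ht.1⟩
  have hcS : sInf S ∈ S := hS_closed.csInf_mem ⟨b, hbS⟩ hS_bdd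
  have hac : a < sInf S := lt_of_le_of_ne hcS.1 fun h => hcS.2 (h ▸ ha)
  have h_before : ∀ t ∈ Ico a (sInf S), f t ∈ U := fun t ht =>
    by_contra fun hft => (csInf_le hS_bdd ⟨ht.1, hft⟩).not_gt ht.2
  refine ⟨sInf S, ⟨hac, csInf_le hS_bdd hbS⟩, ?_, h_before⟩
  rw [hU.frontier_eq]
  refine ⟨?_, hcS.2⟩
  have hc_closure : sInf S ∈ closure (Ioo a (sInf S)) := by
    rw [closure_Ioo hac.ne]
    exact right_mem_Icc.2 hac.le
  have hf_left : ContinuousWithinAt f (Ioo a (sInf S)) (sInf S) :=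
    (hf _ hcS.1).mono (Ioo_subset_Ioi_self.trans Ioi_subset_Ici_self)
  refine closure_mono ?_ (hf_left.mem_closure_image hc_closure)
  exact image_subset_iff.2 fun t ht => h_before t (Ioo_subset_Ico_self ht)

theorem HasDerivAt.nonneg_of_le_left {f : ℝ → ℝ} {f' a b : ℝ} (hf : HasDerivAt f f' b)
    (hab : a < b) (h : ∀ t ∈ Ioo a b, f t ≤ f b) : 0 ≤ f' := by
  have hslope : Tendsto (slope f b) (𝓝[Ioo a b] b) (𝓝 f') :=
    (hasDerivWithinAt_iff_tendsto_slope' (by simp)).mp hf.hasDerivWithinAt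
  have : (𝓝[Ioo a b] b).NeBot := by
    rw [← mem_closure_iff_nhdsWithin_neBot, closure_Ioo hab.ne]
    exact right_mem_Icc.2 hab.le
  refine ge_of_tendsto hslope (eventually_nhdsWithin_of_forall fun t ht => ?_)
  rw [slope_def_field]
  exact div_nonneg_of_nonpos (sub_nonpos.2 (h t ht)) (sub_nonpos.2 ht.2.le)

theorem HasDerivAt.nonpos_of_ge_left {f : ℝ → ℝ} {f' a b : ℝ} (hf : HasDerivAt f f' b)
    (hab : a < b) (h : ∀ t ∈ Ioo a b, f b ≤ f t) : f' ≤ 0 :=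
  neg_nonneg.1 <| hf.neg.nonneg_of_le_left hab fun t ht => neg_le_neg (h t ht)

noncomputable def mixedLogisticRHS (γ μ κ τ : ℝ) (x : ℝ → ℝ) (t : ℝ) : ℝ :=
  γ * x (t - τ) * Real.exp (-μ * τ - κ * ∫ s in (t - τ)..t, x s) - μ * x t - κ * x t ^ 2

section mixedLogisticRHS

variable {γ μ κ τ M t : ℝ} {x : ℝ → ℝ}

theorem mixedLogisticRHS_pos_of_eq_zero (hγ : 0 < γ) (hxt : x t = 0) (hdel : 0 < x (t - τ)) :
    0 < mixedLogisticRHS γ μ κ τ x t := by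
  simp only [mixedLogisticRHS, hxt]
  simpa using mul_pos (mul_pos hγ hdel) (Real.exp_pos _)

theorem mixedLogisticRHS_neg_of_eq (hγ : 0 < γ) (hκ : 0 ≤ κ) (hM : 0 < M) (hxt : x t = M)
    (hdel : x (t - τ) ≤ M) (hint : 0 ≤ ∫ s in (t - τ)..t, x s)
    (hMc : γ * Real.exp (-μ * τ) - μ - κ * M < 0) :
    mixedLogisticRHS γ μ κ τ x t < 0 := by
  have hexp : Real.exp (-μ * τ - κ * ∫ s in (t - τ)..t, x s) ≤ Real.exp (-μ * τ) :=
    Real.exp_le_exp.2 (by nlinarith)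
  calc mixedLogisticRHS γ μ κ τ x t
      ≤ γ * M * Real.exp (-μ * τ) - μ * M - κ * M ^ 2 := by
        rw [mixedLogisticRHS, hxt]
        gcongr
    _ = M * (γ * Real.exp (-μ * τ) - μ - κ * M) := by ring
    _ < 0 := mul_neg_of_pos_of_neg hM hMc

end mixedLogisticRHS

theorem stmt_4_general (γ μ κ τ M : ℝ) (hγ : 0 < γ) (hκ : 0 < κ) (hτ : 0 < τ)
    (x : ℝ → ℝ)
    (hx_cont : ContinuousOn x (Set.Ici (-τ)))
    (hx_pos : ∀ t ∈ Set.Icc (-τ) (0 : ℝ), 0 < x t)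
    (hx_ode : ∀ t > (0 : ℝ), HasDerivAt x
      (γ * x (t - τ) * Real.exp (-μ * τ - κ * ∫ s in (t - τ)..t, x s)
        - μ * x t - κ * (x t) ^ 2) t)
    (hM : ∀ t ∈ Set.Icc (-τ) (0 : ℝ), x t < M)
    (hMc : γ * Real.exp (-μ * τ) - μ - κ * M < 0) :
    ∀ t > (0 : ℝ), 0 < x t ∧ x t < M := by
  by_contra! ⟨b, hb, hb_out⟩
  have h_init : ∀ t ∈ Icc (-τ) 0, x t ∈ Ioo 0 M := fun t ht => ⟨hx_pos t ht, hM t ht⟩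
  have hM0 : 0 < M := (h_init 0 ⟨by linarith, le_rfl⟩).1.trans (h_init 0 ⟨by linarith, le_rfl⟩).2
  obtain ⟨c, ⟨hτc, -⟩, hc_front, hc_before⟩ := exists_first_mem_frontier isOpen_Ioo hx_cont
    (h_init _ ⟨le_rfl, by linarith⟩) (by linarith) fun h => (hb_out h.1).not_gt h.2
  rw [frontier_Ioo hM0, mem_insert_iff, mem_singleton_iff] at hc_front
  have hc : 0 < c := by
    by_contra! hc
    have := h_init c ⟨hτc.le, hc⟩
    rcases hc_front with h | h <;> simp [h] at this
  have hleft : ∀ t ∈ Ioo 0 c, x t ∈ Ioo 0 M := fun t ht => hc_before t ⟨by linarith [ht.1], ht.2⟩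
  have hdel : x (c - τ) ∈ Ioo 0 M := hc_before _ ⟨by linarith, by linarith⟩
  have hderiv : HasDerivAt x (mixedLogisticRHS γ μ κ τ x c) c := hx_ode c hc
  rcases hc_front with hxc | hxc
  · exact (hderiv.nonpos_of_ge_left hc fun t ht => hxc ▸ (hleft t ht).1.le).not_gt
      (mixedLogisticRHS_pos_of_eq_zero hγ hxc hdel.1)
  · have hint : 0 ≤ ∫ s in (c - τ)..c, x s := by
      refine intervalIntegral.integral_nonneg (by linarith) fun s hs => ?_
      rcases hs.2.lt_or_eq with hsc | rfl
      · exact (hc_before s ⟨by linarith [hs.1], hsc⟩).1.le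
      · exact hxc ▸ hM0.le
    exact (hderiv.nonneg_of_le_left hc fun t ht => hxc ▸ (hleft t ht).2.le).not_gt
      (mixedLogisticRHS_neg_of_eq hγ hκ.le hM0 hxc hdel.2.le hint hMc)

/-- Well-posedness: a solution of the mixed alternative logistic DDE with positive
initial data on `[-τ,0]` bounded above by `M`, where `γ e^{-μτ} - μ - κM < 0`,
remains positive and bounded above by `M` for all `t > 0`. -/
theorem stmt_4 (γ μ κ τ M : ℝ) (hγ : 0 < γ) (hμ : 0 < μ) (hκ : 0 < κ) (hτ : 0 < τ)
    (x : ℝ → ℝ)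
    (hx_cont : ContinuousOn x (Set.Ici (-τ)))
    (hx_pos : ∀ t ∈ Set.Icc (-τ) (0 : ℝ), 0 < x t)
    (hx_ode : ∀ t > (0 : ℝ), HasDerivAt x
      (γ * x (t - τ) * Real.exp (-μ * τ - κ * ∫ s in (t - τ)..t, x s)
        - μ * x t - κ * (x t) ^ 2) t)
    (hM : ∀ t ∈ Set.Icc (-τ) (0 : ℝ), x t < M)
    (hMc : γ * Real.exp (-μ * τ) - μ - κ * M < 0) :
    ∀ t > (0 : ℝ), 0 < x t ∧ x t < M :=
  stmt_4_general γ μ κ τ M hγ hκ hτ x hx_cont hx_pos hx_ode hM hMc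
end

section
/- Let γ, μ, κ, τ > 0 with γ·e^{−μτ} ≤ μ (i.e., R₀ ≤ 1). Let x : [−τ, ∞) → ℝ be a bounded, continuous, nonnegative function, differentiable on (0, ∞), satisfying x'(t) = γ·x(t−τ)·exp(−μτ − κ∫_{t−τ}^{t} x(s) ds) − μ·x(t) − κ·x(t)² for all t > 0. Then x(t) → 0 as t → ∞. -/
/-!
Along solutions, the Lyapunov functional `V t = x t + μ ∫_{t-τ}^t x + κ ∫_0^t x²` has derivative
`x (t - τ) (γ e^{-μτ - κ ∫_{t-τ}^t x} - μ)`, which is nonpositive when `γ e^{-μτ} ≤ μ`. Hence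
`κ ∫_0^t x²` stays below `V 1`, so `x²` is integrable on `(0, ∞)`. A bounded solution has bounded
derivative, so `x²` is uniformly continuous there, and Barbalat's lemma gives `x² → 0`.
-/

open MeasureTheory Set Filter Topology

theorem MeasureTheory.IntegrableOn.intervalIntegrable_of_le {E : Type*} [NormedAddCommGroup E]
    {f : ℝ → E} {a b c : ℝ} (hf : IntegrableOn f (Ioi a)) (hb : a ≤ b) (hbc : b ≤ c) :
    IntervalIntegrable f volume b c :=
  (intervalIntegrable_iff_integrableOn_Ioc_of_le hbc).2 <|
    hf.mono_set fun _ hs => lt_of_le_of_lt hb hs.1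

theorem MeasureTheory.IntegrableOn.tendsto_intervalIntegral_add_zero {E : Type*}
    [NormedAddCommGroup E] [NormedSpace ℝ E] {f : ℝ → E} {a : ℝ} (hf : IntegrableOn f (Ioi a))
    {h : ℝ} (hh : 0 ≤ h) : Tendsto (fun t => ∫ s in t..t + h, f s) atTop (𝓝 0) := by
  have hlim := intervalIntegral_tendsto_integral_Ioi a hf tendsto_id
  have hlim_shift := intervalIntegral_tendsto_integral_Ioi a hf
    (tendsto_atTop_add_const_right atTop h tendsto_id)
  simp only [id] at hlim hlim_shift
  rw [← sub_self (∫ s in Ioi a, f s)]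
  refine (hlim_shift.sub hlim).congr' ?_
  filter_upwards [eventually_ge_atTop a] with t ht
  exact intervalIntegral.integral_interval_sub_left
    (hf.intervalIntegrable_of_le le_rfl (by linarith)) (hf.intervalIntegrable_of_le le_rfl ht)

theorem tendsto_zero_of_uniformContinuousOn_of_integrableOn {E : Type*} [NormedAddCommGroup E]
    {f : ℝ → E} {a : ℝ} (hu : UniformContinuousOn f (Ioi a)) (hi : IntegrableOn f (Ioi a)) :
    Tendsto f atTop (𝓝 0) := by
  rw [Metric.tendsto_nhds]
  intro ε hε
  obtain ⟨δ, hδ, hfδ⟩ := Metric.uniformContinuousOn_iff.1 hu (ε / 2) (half_pos hε)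
  obtain ⟨h, hh, hhδ⟩ : ∃ h, 0 < h ∧ h < δ := ⟨δ / 2, half_pos hδ, half_lt_self hδ⟩
  have hi_norm : IntegrableOn (fun s => ‖f s‖) (Ioi a) := hi.norm
  have hwindow := hi_norm.tendsto_intervalIntegral_add_zero hh.le
  filter_upwards [hwindow.eventually (gt_mem_nhds (mul_pos hh (half_pos hε))),
    eventually_gt_atTop a] with t hsmall ht
  -- Averaging over `[t, t + h]`: `‖f t‖ ≤ ε / 2 + h⁻¹ ∫_t^{t+h} ‖f‖`.
  have hclose : ∀ s ∈ Icc t (t + h), ‖f t‖ - ε / 2 ≤ ‖f s‖ := by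
    intro s hs
    have hdist : dist s t < δ := by
      rw [Real.dist_eq, abs_of_nonneg (by linarith [hs.1])]
      linarith [hs.2]
    have := hfδ s (ht.trans_le hs.1) t ht hdist
    rw [dist_eq_norm] at this
    linarith [norm_sub_norm_le (f t) (f s), norm_sub_rev (f s) (f t)]
  have hmono := intervalIntegral.integral_mono_on (by linarith) intervalIntegrable_const
    (hi_norm.intervalIntegrable_of_le ht.le (by linarith)) hclose
  rw [intervalIntegral.integral_const, smul_eq_mul, add_sub_cancel_left] at hmono
  rw [dist_zero_right]
  nlinarith

theorem Set.uIcc_subset_Ici {α : Type*} [Lattice α] {a b c : α} (ha : c ≤ a) (hb : c ≤ b) :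
    uIcc a b ⊆ Ici c :=
  fun _ hs => (le_inf ha hb).trans hs.1

theorem ContinuousOn.hasDerivAt_intervalIntegral_right {E : Type*} [NormedAddCommGroup E]
    [NormedSpace ℝ E] [CompleteSpace E] {f : ℝ → E} {s : Set ℝ} {a b : ℝ}
    (hf : ContinuousOn f s) (hab : uIcc a b ⊆ s) (hb : s ∈ 𝓝 b) :
    HasDerivAt (fun u => ∫ x in a..u, f x) (f b) b :=
  intervalIntegral.integral_hasDerivAt_right (hf.mono hab).intervalIntegrable
    ((hf.mono interior_subset).stronglyMeasurableAtFilter isOpen_interior b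
      (mem_interior_iff_mem_nhds.2 hb))
    (hf.continuousAt hb)

namespace MixedLogistic

noncomputable def rhs (γ μ κ τ : ℝ) (x : ℝ → ℝ) (t : ℝ) : ℝ :=
  γ * x (t - τ) * Real.exp (-μ * τ - κ * ∫ s in (t - τ)..t, x s) - μ * x t - κ * x t ^ 2

noncomputable def lyapunov (μ κ τ : ℝ) (x : ℝ → ℝ) (t : ℝ) : ℝ :=
  x t + μ * (∫ s in (t - τ)..t, x s) + κ * ∫ s in (0 : ℝ)..t, x s ^ 2

variable {γ μ κ τ : ℝ} {x : ℝ → ℝ}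

theorem integral_window_nonneg (hτ : 0 ≤ τ) (hx_nonneg : ∀ t, -τ ≤ t → 0 ≤ x t) {t : ℝ}
    (ht : 0 ≤ t) : 0 ≤ ∫ s in (t - τ)..t, x s :=
  intervalIntegral.integral_nonneg (by linarith) fun s hs => hx_nonneg s (by linarith [hs.1])

theorem hasDerivAt_integral_window (hτ : 0 ≤ τ) (hx_cont : ContinuousOn x (Ici (-τ))) {t : ℝ}
    (ht : 0 < t) : HasDerivAt (fun u => ∫ s in (u - τ)..u, x s) (x t - x (t - τ)) t := by
  have hint : ∀ u, -τ ≤ u → IntervalIntegrable x volume (-τ) u := fun u hu =>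
    (hx_cont.mono (uIcc_subset_Ici le_rfl hu)).intervalIntegrable
  have hderiv : ∀ u, -τ < u → HasDerivAt (fun v => ∫ s in (-τ)..v, x s) (x u) u := fun u hu =>
    hx_cont.hasDerivAt_intervalIntegral_right (uIcc_subset_Ici le_rfl hu.le) (Ici_mem_nhds hu)
  have hshift := (hderiv (t - τ) (by linarith)).comp_sub_const t τ
  refine ((hderiv t (by linarith)).sub hshift).congr_of_eventuallyEq ?_
  filter_upwards [eventually_gt_nhds ht] with u hu
  exact (intervalIntegral.integral_interval_sub_left (hint u (by linarith))
    (hint (u - τ) (by linarith))).symm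

theorem hasDerivAt_lyapunov (hτ : 0 ≤ τ) (hx_cont : ContinuousOn x (Ici (-τ)))
    (hx_ode : ∀ t > (0 : ℝ), HasDerivAt x (rhs γ μ κ τ x t) t) {t : ℝ} (ht : 0 < t) :
    HasDerivAt (lyapunov μ κ τ x)
      (x (t - τ) * (γ * Real.exp (-μ * τ - κ * ∫ s in (t - τ)..t, x s) - μ)) t := by
  have hsq := (hx_cont.pow 2).hasDerivAt_intervalIntegral_right (a := 0)
    (uIcc_subset_Ici (by linarith) (by linarith)) (Ici_mem_nhds (by linarith : -τ < t))
  have h := ((hx_ode t ht).add ((hasDerivAt_integral_window hτ hx_cont ht).const_mul μ)).add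
    (hsq.const_mul κ)
  exact h.congr_deriv (by simp only [rhs, Pi.pow_apply]; ring)

theorem lyapunov_deriv_nonpos (hγ : 0 ≤ γ) (hκ : 0 ≤ κ) (hτ : 0 ≤ τ)
    (hR0 : γ * Real.exp (-μ * τ) ≤ μ) (hx_nonneg : ∀ t, -τ ≤ t → 0 ≤ x t) {t : ℝ} (ht : 0 ≤ t) :
    x (t - τ) * (γ * Real.exp (-μ * τ - κ * ∫ s in (t - τ)..t, x s) - μ) ≤ 0 := by
  have hexp : Real.exp (-μ * τ - κ * ∫ s in (t - τ)..t, x s) ≤ Real.exp (-μ * τ) :=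
    Real.exp_le_exp.2 (sub_le_self _ (mul_nonneg hκ (integral_window_nonneg hτ hx_nonneg ht)))
  exact mul_nonpos_of_nonneg_of_nonpos (hx_nonneg _ (by linarith))
    (sub_nonpos.2 ((mul_le_mul_of_nonneg_left hexp hγ).trans hR0))

theorem antitoneOn_lyapunov (hγ : 0 ≤ γ) (hκ : 0 ≤ κ) (hτ : 0 ≤ τ)
    (hR0 : γ * Real.exp (-μ * τ) ≤ μ) (hx_cont : ContinuousOn x (Ici (-τ)))
    (hx_nonneg : ∀ t, -τ ≤ t → 0 ≤ x t)
    (hx_ode : ∀ t > (0 : ℝ), HasDerivAt x (rhs γ μ κ τ x t) t) :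
    AntitoneOn (lyapunov μ κ τ x) (Ioi 0) := by
  have hderiv := fun t (ht : t ∈ Ioi (0 : ℝ)) => hasDerivAt_lyapunov hτ hx_cont hx_ode ht
  refine antitoneOn_of_hasDerivWithinAt_nonpos (convex_Ioi 0)
    (f' := fun t => x (t - τ) * (γ * Real.exp (-μ * τ - κ * ∫ s in (t - τ)..t, x s) - μ))
    (fun t ht => (hderiv t ht).continuousAt.continuousWithinAt) ?_ ?_ <;> rw [interior_Ioi]
  · exact fun t ht => (hderiv t ht).hasDerivWithinAt
  · exact fun t ht => lyapunov_deriv_nonpos hγ hκ hτ hR0 hx_nonneg (le_of_lt ht)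

theorem integrableOn_sq (hγ : 0 ≤ γ) (hμ : 0 ≤ μ) (hκ : 0 < κ) (hτ : 0 ≤ τ)
    (hR0 : γ * Real.exp (-μ * τ) ≤ μ) (hx_cont : ContinuousOn x (Ici (-τ)))
    (hx_nonneg : ∀ t, -τ ≤ t → 0 ≤ x t)
    (hx_ode : ∀ t > (0 : ℝ), HasDerivAt x (rhs γ μ κ τ x t) t) :
    IntegrableOn (fun t => x t ^ 2) (Ioi 0) := by
  have hanti := antitoneOn_lyapunov hγ hκ.le hτ hR0 hx_cont hx_nonneg hx_ode
  refine integrableOn_Ioi_of_intervalIntegral_norm_bounded (lyapunov μ κ τ x 1 / κ) 0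
    (fun T => ?_) tendsto_id ?_
  · have hcont := (hx_cont.pow 2).mono fun s (hs : s ∈ Icc 0 T) => mem_Ici.2 (by linarith [hs.1])
    exact hcont.integrableOn_Icc.mono_set Ioc_subset_Icc_self
  filter_upwards [eventually_ge_atTop 1] with T hT
  have hdom : κ * ∫ s in (0 : ℝ)..T, x s ^ 2 ≤ lyapunov μ κ τ x T := by
    have hwindow := integral_window_nonneg hτ hx_nonneg (t := T) (by linarith)
    have hxT := hx_nonneg T (by linarith)
    simp only [lyapunov]
    nlinarith
  simp only [id, Real.norm_eq_abs, abs_pow, sq_abs]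
  rw [le_div_iff₀' hκ]
  exact hdom.trans (hanti (mem_Ioi.2 one_pos) (mem_Ioi.2 (by linarith)) hT)

theorem abs_rhs_le (hγ : 0 ≤ γ) (hμ : 0 ≤ μ) (hκ : 0 ≤ κ) (hτ : 0 ≤ τ)
    (hx_nonneg : ∀ t, -τ ≤ t → 0 ≤ x t) {B : ℝ} (hB : ∀ t, -τ ≤ t → x t ≤ B) {t : ℝ}
    (ht : 0 ≤ t) : |rhs γ μ κ τ x t| ≤ γ * B + μ * B + κ * B ^ 2 := by
  have hexp : Real.exp (-μ * τ - κ * ∫ s in (t - τ)..t, x s) ≤ 1 :=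
    Real.exp_le_one_iff.2 (by nlinarith [integral_window_nonneg hτ hx_nonneg ht])
  have hx₀ := hx_nonneg (t - τ) (by linarith)
  have hx₁ := hx_nonneg t (by linarith)
  have hB₀ := hB (t - τ) (by linarith)
  have hB₁ := hB t (by linarith)
  have hbirth : γ * x (t - τ) * Real.exp (-μ * τ - κ * ∫ s in (t - τ)..t, x s) ≤ γ * B :=
    (mul_le_of_le_one_right (by positivity) hexp).trans (by gcongr)
  have hdeath : μ * x t + κ * x t ^ 2 ≤ μ * B + κ * B ^ 2 := by gcongr
  have : 0 ≤ γ * x (t - τ) * Real.exp (-μ * τ - κ * ∫ s in (t - τ)..t, x s) := by positivity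
  have : 0 ≤ μ * x t + κ * x t ^ 2 := by positivity
  rw [rhs, sub_sub, abs_le]
  constructor <;> linarith

theorem uniformContinuousOn_sq (hγ : 0 ≤ γ) (hμ : 0 ≤ μ) (hκ : 0 ≤ κ) (hτ : 0 ≤ τ)
    (hx_nonneg : ∀ t, -τ ≤ t → 0 ≤ x t) {B : ℝ} (hB : ∀ t, -τ ≤ t → x t ≤ B)
    (hx_ode : ∀ t > (0 : ℝ), HasDerivAt x (rhs γ μ κ τ x t) t) :
    UniformContinuousOn (fun t => x t ^ 2) (Ioi 0) := by
  have hB_nonneg : 0 ≤ B := (hx_nonneg 0 (by linarith)).trans (hB 0 (by linarith))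
  have hlip : LipschitzOnWith (γ * B + μ * B + κ * B ^ 2).toNNReal x (Ioi 0) :=
    (convex_Ioi 0).lipschitzOnWith_of_nnnorm_hasDerivWithin_le
      (fun t ht => (hx_ode t ht).hasDerivWithinAt) fun t ht => by
        rw [← NNReal.coe_le_coe, coe_nnnorm, Real.norm_eq_abs, Real.coe_toNNReal _ (by positivity)]
        exact abs_rhs_le hγ hμ hκ hτ hx_nonneg hB (le_of_lt ht)
  have hsq : UniformContinuousOn (fun y : ℝ => y ^ 2) (Icc 0 B) :=
    isCompact_Icc.uniformContinuousOn_of_continuous (continuous_pow 2).continuousOn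
  exact hsq.comp hlip.uniformContinuousOn fun t ht =>
    ⟨hx_nonneg t (by linarith [mem_Ioi.1 ht]), hB t (by linarith [mem_Ioi.1 ht])⟩

end MixedLogistic

/-- Global extinction: if `γ e^{-μτ} ≤ μ` (i.e. `R₀ ≤ 1`), every bounded continuous
nonnegative solution of the mixed alternative logistic DDE tends to `0`. -/
theorem stmt_5 (γ μ κ τ : ℝ) (hγ : 0 < γ) (hμ : 0 < μ) (hκ : 0 < κ) (hτ : 0 < τ)
    (hR0 : γ * Real.exp (-μ * τ) ≤ μ)
    (x : ℝ → ℝ)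
    (hx_cont : ContinuousOn x (Set.Ici (-τ)))
    (hx_nonneg : ∀ t, -τ ≤ t → 0 ≤ x t)
    (hx_bdd : ∃ B : ℝ, ∀ t, -τ ≤ t → x t ≤ B)
    (hx_ode : ∀ t > (0 : ℝ), HasDerivAt x
      (γ * x (t - τ) * Real.exp (-μ * τ - κ * ∫ s in (t - τ)..t, x s)
        - μ * x t - κ * (x t) ^ 2) t) :
    Filter.Tendsto x Filter.atTop (nhds 0) := by
  obtain ⟨B, hB⟩ := hx_bdd
  have hsq : Tendsto (fun t => x t ^ 2) atTop (𝓝 0) :=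
    tendsto_zero_of_uniformContinuousOn_of_integrableOn
      (MixedLogistic.uniformContinuousOn_sq hγ.le hμ.le hκ.le hτ.le hx_nonneg hB hx_ode)
      (MixedLogistic.integrableOn_sq hγ.le hμ.le hκ hτ.le hR0 hx_cont hx_nonneg hx_ode)
  rw [tendsto_zero_iff_abs_tendsto_zero]
  simpa [Function.comp_def, Real.sqrt_sq_eq_abs] using (Real.continuous_sqrt.tendsto 0).comp hsq
end

section
/- Let γ, μ, κ, τ > 0 with γ·e^{−μτ} > μ (i.e., R₀ > 1), and let x* > 0 be the unique positive root of γ·e^{−τ(μ+κx)} = μ + κx. Let x : [−τ, ∞) → ℝ be continuous, positive on [−τ, 0], differentiable on (0, ∞), and satisfy x'(t) = γ·x(t−τ)·exp(−μτ − κ∫_{t−τ}^{t} x(s) ds) − μ·x(t) − κ·x(t)² for all t > 0. Then x(t) → x* as t → ∞. -/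
/-!
Put `λ = μ + κx*`, so that the equilibrium equation reads `γe^{-λτ} = λ`. With
`g(t) = κ∫₀ᵗ (x - x*)`, the function `w = x·e^g` solves the linear delay equation
`w'(t) = λ(w(t - τ) - w(t))`: the integrating factor absorbs both the competition term and the
exponential in the birth term. For this equation `w(t₀)` enters every value of `w` on
`[t₀, t₀ + τ]` with weight at least `e^{-λτ}`, so the oscillation of `w` over consecutive windows
of length `τ` contracts by the factor `1 - e^{-λτ}`, and `w` tends to a limit `L > 0`. Finally
`u = e^g` relaxes towards `w/x*` (`u' = κx*(w/x* - u)`), so `u → L/x*` and `x = w/u → x*`.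
-/

open Real Set Filter Topology

theorem sub_le_exp_mul_of_hasDerivAt_le {f f' : ℝ → ℝ} {a c t₀ t₁ : ℝ}
    (hf : ContinuousOn f (Icc t₀ t₁)) (hf' : ∀ t ∈ Ioo t₀ t₁, HasDerivAt f (f' t) t)
    (hle : ∀ t ∈ Ioo t₀ t₁, f' t ≤ -a * (f t - c)) {t : ℝ} (ht : t ∈ Icc t₀ t₁) :
    f t - c ≤ exp (-(a * (t - t₀))) * (f t₀ - c) := by
  have hanti : AntitoneOn (fun s => exp (a * s) * (f s - c)) (Icc t₀ t₁) := by
    refine antitoneOn_of_hasDerivWithinAt_nonpos (convex_Icc t₀ t₁)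
      ((continuous_const.mul continuous_id).rexp.continuousOn.mul (hf.sub continuousOn_const))
      (f' := fun s => a * exp (a * s) * (f s - c) + exp (a * s) * f' s) ?_ ?_ <;>
      rw [interior_Icc] <;> intro s hs
    · have hexp : HasDerivAt (fun s => exp (a * s)) (a * exp (a * s)) s := by
        simpa [mul_comm] using ((hasDerivAt_id s).const_mul a).exp
      exact (hexp.mul ((hf' s hs).sub_const c)).hasDerivWithinAt
    · nlinarith [hle s hs, exp_pos (a * s)]
  have hmono := hanti ⟨le_rfl, ht.1.trans ht.2⟩ ht ht.1
  calc f t - c = exp (-(a * t)) * (exp (a * t) * (f t - c)) := by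
        rw [← mul_assoc, ← exp_add, neg_add_cancel, exp_zero, one_mul]
    _ ≤ exp (-(a * t)) * (exp (a * t₀) * (f t₀ - c)) :=
        mul_le_mul_of_nonneg_left hmono (exp_pos _).le
    _ = exp (-(a * (t - t₀))) * (f t₀ - c) := by
        rw [← mul_assoc, ← exp_add]; ring_nf

section Primitive

variable {f : ℝ → ℝ} {a : ℝ}

theorem intervalIntegrable_of_continuousOn_Ici (hf : ContinuousOn f (Ici a)) {b c : ℝ}
    (hb : a ≤ b) (hc : a ≤ c) : IntervalIntegrable f MeasureTheory.volume b c :=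
  (hf.mono fun _ hs => le_trans (le_inf hb hc) hs.1).intervalIntegrable

theorem hasDerivAt_integral_of_continuousOn_Ici (hf : ContinuousOn f (Ici a)) {c t : ℝ}
    (hc : a ≤ c) (ht : a < t) : HasDerivAt (fun u => ∫ s in c..u, f s) (f t) t :=
  intervalIntegral.integral_hasDerivAt_right (intervalIntegrable_of_continuousOn_Ici hf hc ht.le)
    ((hf.mono Ioi_subset_Ici_self).stronglyMeasurableAtFilter isOpen_Ioi t ht)
    (hf.continuousAt (Ici_mem_nhds ht))

theorem continuousOn_integral_of_continuousOn_Ici (hf : ContinuousOn f (Ici a)) {c : ℝ}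
    (hc : a ≤ c) : ContinuousOn (fun u => ∫ s in c..u, f s) (Ici a) := by
  intro t ht
  have hIcc : ContinuousWithinAt (fun u => ∫ s in c..u, f s) (Icc a (t + 1)) t :=
    intervalIntegral.continuousWithinAt_primitive (MeasureTheory.measure_singleton t)
      (intervalIntegrable_of_continuousOn_Ici hf (le_min hc le_rfl)
        (le_max_of_le_right (by linarith [mem_Ici.1 ht])))
  exact hIcc.mono_of_mem_nhdsWithin
    (mem_nhdsWithin.2 ⟨Iio (t + 1), isOpen_Iio, by simp, fun s hs => ⟨hs.2, hs.1.le⟩⟩)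

end Primitive

section Relaxation

variable {a L : ℝ} {u v : ℝ → ℝ}

theorem eventually_lt_of_hasDerivAt_relaxation {c : ℝ} (ha : 0 < a)
    (hv : Tendsto v atTop (𝓝 L)) (hu : ∀ t > 0, HasDerivAt u (a * (v t - u t)) t) (hc : L < c) :
    ∀ᶠ t in atTop, u t < c := by
  obtain ⟨b, hLb, hbc⟩ := exists_between hc
  obtain ⟨T, hT⟩ := eventually_atTop.1 (hv.eventually (ge_mem_nhds hLb))
  set T₁ := max T 1
  have hT₁ : 0 < T₁ := lt_max_of_lt_right one_pos
  have hdecay : ∀ t, T₁ ≤ t → u t - b ≤ exp (-(a * (t - T₁))) * (u T₁ - b) := fun t ht =>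
    sub_le_exp_mul_of_hasDerivAt_le (t₁ := t)
      (fun s hs => (hu s (hT₁.trans_le hs.1)).continuousAt.continuousWithinAt)
      (fun s hs => hu s (hT₁.trans hs.1))
      (fun s hs => by nlinarith [hT s ((le_max_left T 1).trans hs.1.le)]) ⟨ht, le_rfl⟩
  have hlim : Tendsto (fun t => exp (-(a * (t - T₁))) * (u T₁ - b)) atTop (𝓝 0) := by
    have : Tendsto (fun t => a * (t - T₁)) atTop atTop :=
      (tendsto_atTop_add_const_right _ (-T₁) tendsto_id).const_mul_atTop ha
    simpa using (tendsto_exp_neg_atTop_nhds_zero.comp this).mul_const (u T₁ - b)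
  filter_upwards [eventually_ge_atTop T₁, hlim.eventually (gt_mem_nhds (sub_pos.2 hbc))]
    with t ht hsmall
  linarith [hdecay t ht]

theorem tendsto_of_hasDerivAt_relaxation (ha : 0 < a) (hv : Tendsto v atTop (𝓝 L))
    (hu : ∀ t > 0, HasDerivAt u (a * (v t - u t)) t) : Tendsto u atTop (𝓝 L) := by
  refine tendsto_order.2
    ⟨fun c hc => ?_, fun c hc => eventually_lt_of_hasDerivAt_relaxation ha hv hu hc⟩
  have hneg := eventually_lt_of_hasDerivAt_relaxation (u := fun t => -u t) ha hv.neg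
    (fun t ht => (hu t ht).neg.congr_deriv (by ring)) (neg_lt_neg hc)
  exact hneg.mono fun t ht => neg_lt_neg_iff.1 ht

end Relaxation

section LinearDelay

variable {a τ : ℝ} {w : ℝ → ℝ}

theorem linearDelay_mem_Icc_next_window {m M t₀ : ℝ} (ha : 0 ≤ a) (hcont : ContinuousOn w (Ici 0))
    (hw : ∀ t > 0, HasDerivAt w (a * (w (t - τ) - w t)) t) (ht₀ : 0 ≤ t₀)
    (hwin : ∀ s ∈ Icc (t₀ - τ) t₀, w s ∈ Icc m M) {t : ℝ} (ht : t ∈ Icc t₀ (t₀ + τ)) :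
    w t ∈ Icc (m + exp (-(a * τ)) * (w t₀ - m)) (M - exp (-(a * τ)) * (M - w t₀)) := by
  have hcont' : ContinuousOn w (Icc t₀ (t₀ + τ)) := hcont.mono fun s hs => ht₀.trans hs.1
  have hderiv : ∀ s ∈ Ioo t₀ (t₀ + τ), HasDerivAt w (a * (w (s - τ) - w s)) s :=
    fun s hs => hw s (ht₀.trans_lt hs.1)
  have hpast : ∀ s ∈ Ioo t₀ (t₀ + τ), w (s - τ) ∈ Icc m M :=
    fun s hs => hwin _ ⟨by linarith [hs.1], by linarith [hs.2]⟩
  have hw₀ : w t₀ ∈ Icc m M := hwin t₀ ⟨by linarith [ht.1, ht.2], le_rfl⟩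
  have hdecay : exp (-(a * τ)) ≤ exp (-(a * (t - t₀))) := exp_le_exp.2 (by nlinarith [ht.2])
  have hupper := sub_le_exp_mul_of_hasDerivAt_le (a := a) (c := M) hcont' hderiv
    (fun s hs => by nlinarith [(hpast s hs).2]) ht
  have hlower := sub_le_exp_mul_of_hasDerivAt_le (f := fun s => -w s) (a := a) (c := -m)
    hcont'.neg
    (fun s hs => (hderiv s hs).neg) (fun s hs => by nlinarith [(hpast s hs).1]) ht
  constructor <;> nlinarith [hw₀.1, hw₀.2]

theorem linearDelay_mem_Icc_of_window {m M t₀ : ℝ} (ha : 0 ≤ a) (hτ : 0 < τ)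
    (hcont : ContinuousOn w (Ici 0)) (hw : ∀ t > 0, HasDerivAt w (a * (w (t - τ) - w t)) t)
    (ht₀ : 0 ≤ t₀) (hwin : ∀ s ∈ Icc (t₀ - τ) t₀, w s ∈ Icc m M) {t : ℝ} (ht : t₀ - τ ≤ t) :
    w t ∈ Icc m M := by
  have hstep : ∀ n : ℕ, ∀ s ∈ Icc (t₀ - τ) (t₀ + n * τ), w s ∈ Icc m M := by
    intro n
    induction n with
    | zero => simpa using hwin
    | succ n ih =>
      intro s hs
      have hnτ : 0 ≤ n * τ := by positivity
      rcases le_or_gt s (t₀ + n * τ) with hle | hlt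
      · exact ih s ⟨hs.1, hle⟩
      have hnext := linearDelay_mem_Icc_next_window ha hcont hw (by linarith)
        (fun r hr => ih r ⟨by linarith [hr.1], hr.2⟩) (t := s)
        ⟨hlt.le, by push_cast at hs; linarith [hs.2]⟩
      have hcur := ih (t₀ + n * τ) ⟨by linarith, le_rfl⟩
      have hδ := (exp_pos (-(a * τ))).le
      constructor <;> nlinarith [hnext.1, hnext.2, hcur.1, hcur.2]
  obtain ⟨n, hn⟩ := exists_nat_ge ((t - t₀) / τ)
  exact hstep n t ⟨ht, by rw [div_le_iff₀ hτ] at hn; linarith⟩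

theorem linearDelay_exists_contraction {m M t₀ : ℝ} (ha : 0 ≤ a) (hτ : 0 < τ)
    (hcont : ContinuousOn w (Ici 0)) (hw : ∀ t > 0, HasDerivAt w (a * (w (t - τ) - w t)) t)
    (ht₀ : 0 ≤ t₀) (hwin : ∀ s ∈ Icc (t₀ - τ) t₀, w s ∈ Icc m M) :
    ∃ m' M', M' - m' = (1 - exp (-(a * τ))) * (M - m) ∧ ∀ t, t₀ ≤ t → w t ∈ Icc m' M' := by
  refine ⟨m + exp (-(a * τ)) * (w t₀ - m), M - exp (-(a * τ)) * (M - w t₀), by ring,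
    fun t ht => ?_⟩
  refine linearDelay_mem_Icc_of_window ha hτ hcont hw (t₀ := t₀ + τ) (by linarith)
    (fun s hs => linearDelay_mem_Icc_next_window ha hcont hw ht₀ hwin ?_) (by linarith)
  exact ⟨by linarith [hs.1], hs.2⟩

theorem linearDelay_exists_tendsto (ha : 0 < a) (hτ : 0 < τ) (hcont : ContinuousOn w (Ici (-τ)))
    (hpos : ∀ t ∈ Icc (-τ) 0, 0 < w t) (hw : ∀ t > 0, HasDerivAt w (a * (w (t - τ) - w t)) t) :
    ∃ L, 0 < L ∧ Tendsto w atTop (𝓝 L) := by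
  have hne : (Icc (-τ) 0).Nonempty := nonempty_Icc.2 (by linarith)
  have hcontIcc : ContinuousOn w (Icc (-τ) 0) := hcont.mono Icc_subset_Ici_self
  obtain ⟨s₁, hs₁, hmin⟩ := isCompact_Icc.exists_isMinOn hne hcontIcc
  obtain ⟨s₂, -, hmax⟩ := isCompact_Icc.exists_isMaxOn hne hcontIcc
  have hwin : ∀ s ∈ Icc (0 - τ) 0, w s ∈ Icc (w s₁) (w s₂) := fun s hs => by
    rw [zero_sub] at hs
    exact ⟨hmin hs, hmax hs⟩
  have hcont₀ : ContinuousOn w (Ici 0) := hcont.mono (Ici_subset_Ici.2 (by linarith))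
  set c := 1 - exp (-(a * τ))
  have hc₀ : 0 ≤ c := sub_nonneg.2 (exp_le_one_iff.2 (by nlinarith))
  have hc₁ : c < 1 := sub_lt_self 1 (exp_pos _)
  have hosc : ∀ k : ℕ, ∃ m M, M - m ≤ c ^ k * (w s₂ - w s₁) ∧
      ∀ t, k * τ - τ ≤ t → w t ∈ Icc m M := by
    intro k
    induction k with
    | zero =>
      exact ⟨_, _, by simp, fun t ht =>
        linearDelay_mem_Icc_of_window ha.le hτ hcont₀ hw le_rfl hwin (by simpa using ht)⟩
    | succ k ih =>
      obtain ⟨m, M, hmM, hk⟩ := ih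
      obtain ⟨m', M', hmM', hk'⟩ := linearDelay_exists_contraction ha.le hτ hcont₀ hw
        (t₀ := k * τ) (by positivity) (fun s hs => hk s hs.1)
      refine ⟨m', M', ?_, fun t ht => hk' t (by push_cast at ht; linarith)⟩
      rw [hmM', pow_succ', mul_assoc]
      exact mul_le_mul_of_nonneg_left hmM hc₀
  have hcauchy : CauchySeq w := by
    rw [Metric.cauchySeq_iff']
    intro ε hε
    have hsmall : Tendsto (fun k : ℕ => c ^ k * (w s₂ - w s₁)) atTop (𝓝 0) := by
      simpa using (tendsto_pow_atTop_nhds_zero_of_lt_one hc₀ hc₁).mul_const (w s₂ - w s₁)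
    obtain ⟨k, hk⟩ := (hsmall.eventually (gt_mem_nhds hε)).exists
    obtain ⟨m, M, hmM, hbound⟩ := hosc k
    refine ⟨k * τ - τ, fun t ht => ?_⟩
    exact (Real.dist_le_of_mem_Icc (hbound t ht) (hbound _ le_rfl)).trans_lt (hmM.trans_lt hk)
  obtain ⟨L, hL⟩ := cauchySeq_tendsto_of_complete hcauchy
  have hlower : ∀ t, 0 ≤ t → w s₁ ≤ w t := fun t ht =>
    (linearDelay_mem_Icc_of_window ha.le hτ hcont₀ hw le_rfl hwin (by linarith)).1
  exact ⟨L, (hpos s₁ hs₁).trans_le (ge_of_tendsto hL (eventually_atTop.2 ⟨0, hlower⟩)), hL⟩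

end LinearDelay

noncomputable def cumulativeExcess (κ xs : ℝ) (x : ℝ → ℝ) (t : ℝ) : ℝ :=
  κ * ((∫ s in (0 : ℝ)..t, x s) - xs * t)

section CumulativeExcess

variable {κ xs a : ℝ} {x : ℝ → ℝ}

theorem continuousOn_cumulativeExcess (hx : ContinuousOn x (Ici a)) (ha : a ≤ 0) :
    ContinuousOn (cumulativeExcess κ xs x) (Ici a) :=
  continuousOn_const.mul
    ((continuousOn_integral_of_continuousOn_Ici hx ha).sub
      (continuous_const.mul continuous_id).continuousOn)

theorem hasDerivAt_cumulativeExcess (hx : ContinuousOn x (Ici a)) (ha : a ≤ 0) {t : ℝ}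
    (ht : a < t) : HasDerivAt (cumulativeExcess κ xs x) (κ * (x t - xs)) t :=
  ((hasDerivAt_integral_of_continuousOn_Ici hx ha ht).sub
    ((hasDerivAt_id t).const_mul xs |>.congr_deriv (mul_one xs))).const_mul κ

theorem cumulativeExcess_sub_integral {τ t : ℝ} (hτ : 0 ≤ τ) (hx : ContinuousOn x (Ici (-τ)))
    (ht : 0 ≤ t) :
    cumulativeExcess κ xs x t - κ * ∫ s in (t - τ)..t, x s
      = cumulativeExcess κ xs x (t - τ) - κ * xs * τ := by
  rw [← intervalIntegral.integral_interval_sub_left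
    (intervalIntegrable_of_continuousOn_Ici hx (b := 0) (c := t) (by linarith) (by linarith))
    (intervalIntegrable_of_continuousOn_Ici hx (c := t - τ) (by linarith) (by linarith))]
  unfold cumulativeExcess
  ring

end CumulativeExcess

theorem hasDerivAt_mul_exp_cumulativeExcess {γ μ κ τ xs t : ℝ} {x : ℝ → ℝ}
    (hxs_eq : γ * exp (-τ * (μ + κ * xs)) = μ + κ * xs) (hτ : 0 ≤ τ)
    (hx : ContinuousOn x (Ici (-τ)))
    (ht : 0 < t) (hode : HasDerivAt x
      (γ * x (t - τ) * exp (-μ * τ - κ * ∫ s in (t - τ)..t, x s) - μ * x t - κ * (x t) ^ 2) t) :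
    HasDerivAt (fun s => x s * exp (cumulativeExcess κ xs x s))
      ((μ + κ * xs) * (x (t - τ) * exp (cumulativeExcess κ xs x (t - τ))
        - x t * exp (cumulativeExcess κ xs x t))) t := by
  have hshift : γ * exp (-μ * τ - κ * ∫ s in (t - τ)..t, x s) * exp (cumulativeExcess κ xs x t)
      = (μ + κ * xs) * exp (cumulativeExcess κ xs x (t - τ)) := by
    rw [← hxs_eq, mul_assoc, ← exp_add, mul_assoc, ← exp_add]
    congr 2
    linear_combination cumulativeExcess_sub_integral (κ := κ) (xs := xs) hτ hx ht.le
  refine (hode.mul (hasDerivAt_cumulativeExcess hx (by linarith) (by linarith : -τ < t)).exp)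
    |>.congr_deriv ?_
  linear_combination x (t - τ) * hshift

theorem stmt_6_general (γ μ κ τ xs : ℝ) (hμ : 0 < μ) (hκ : 0 < κ) (hτ : 0 < τ)
    (hxs : 0 < xs) (hxs_eq : γ * Real.exp (-τ * (μ + κ * xs)) = μ + κ * xs)
    (x : ℝ → ℝ)
    (hx_cont : ContinuousOn x (Set.Ici (-τ)))
    (hx_pos : ∀ t ∈ Set.Icc (-τ) (0 : ℝ), 0 < x t)
    (hx_ode : ∀ t > (0 : ℝ), HasDerivAt x
      (γ * x (t - τ) * Real.exp (-μ * τ - κ * ∫ s in (t - τ)..t, x s)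
        - μ * x t - κ * (x t) ^ 2) t) :
    Filter.Tendsto x Filter.atTop (nhds xs) := by
  set g := cumulativeExcess κ xs x
  obtain ⟨L, hL, hw⟩ := linearDelay_exists_tendsto (w := fun t => x t * exp (g t))
    (by positivity : 0 < μ + κ * xs) hτ
    (hx_cont.mul (continuousOn_cumulativeExcess hx_cont (by linarith)).rexp)
    (fun t ht => mul_pos (hx_pos t ht) (exp_pos _))
    (fun t ht => hasDerivAt_mul_exp_cumulativeExcess hxs_eq hτ.le hx_cont ht (hx_ode t ht))
  have hexp : Tendsto (fun t => exp (g t)) atTop (𝓝 (L / xs)) :=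
    tendsto_of_hasDerivAt_relaxation (mul_pos hκ hxs) (hw.div_const xs) fun t ht =>
      (hasDerivAt_cumulativeExcess hx_cont (by linarith) (by linarith : -τ < t)).exp.congr_deriv
        (by field_simp; ring)
  have hx : x = fun t => x t * exp (g t) / exp (g t) := by
    funext t
    rw [mul_div_cancel_right₀ _ (exp_pos _).ne']
  rw [hx, show xs = L / (L / xs) by field_simp]
  exact hw.div hexp (by positivity)

/-- Global stability: if `γ e^{-μτ} > μ` (i.e. `R₀ > 1`) and `x* > 0` is the positive
equilibrium (root of `γ e^{-τ(μ+κx)} = μ+κx`), every solution of the mixed alternative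
logistic DDE with positive initial data on `[-τ,0]` converges to `x*`. -/
theorem stmt_6 (γ μ κ τ xs : ℝ) (hγ : 0 < γ) (hμ : 0 < μ) (hκ : 0 < κ) (hτ : 0 < τ)
    (hR0 : μ < γ * Real.exp (-μ * τ))
    (hxs : 0 < xs) (hxs_eq : γ * Real.exp (-τ * (μ + κ * xs)) = μ + κ * xs)
    (x : ℝ → ℝ)
    (hx_cont : ContinuousOn x (Set.Ici (-τ)))
    (hx_pos : ∀ t ∈ Set.Icc (-τ) (0 : ℝ), 0 < x t)
    (hx_ode : ∀ t > (0 : ℝ), HasDerivAt x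
      (γ * x (t - τ) * Real.exp (-μ * τ - κ * ∫ s in (t - τ)..t, x s)
        - μ * x t - κ * (x t) ^ 2) t) :
    Filter.Tendsto x Filter.atTop (nhds xs) :=
  stmt_6_general γ μ κ τ xs hμ hκ hτ hxs hxs_eq x hx_cont hx_pos hx_ode
end

section
/- Let γ, μ, κ, τ > 0 and let x : [−τ, ∞) → ℝ be continuous, differentiable on (0, ∞), and satisfy x'(t) = γ·x(t−τ)·exp(−μτ − κ∫_{t−τ}^{t} x(s) ds) − μ·x(t) − κ·x(t)² for all t > 0. Define Y(t) = γ·exp(−μτ − κ∫_{t−τ}^{t} x(s) ds) − μ − κ·x(t). Then Y is differentiable on (0, ∞) and Y'(t) = −κ·x(t)·Y(t) for all t > 0. -/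
open Topology MeasureTheory Set

variable {E : Type*} [NormedAddCommGroup E] [NormedSpace ℝ E] [CompleteSpace E]

theorem intervalIntegral.hasDerivAt_integral_sub_const_self {f : ℝ → E} {τ t : ℝ}
    (hf : IntervalIntegrable f volume (t - τ) t)
    (hmeas_a : StronglyMeasurableAtFilter f (𝓝 (t - τ)))
    (hmeas_b : StronglyMeasurableAtFilter f (𝓝 t))
    (ha : ContinuousAt f (t - τ)) (hb : ContinuousAt f t) :
    HasDerivAt (fun u => ∫ s in (u - τ)..u, f s) (f t - f (t - τ)) t := by
  have hwindow : HasDerivAt (fun u : ℝ => (u - τ, u)) ((1 : ℝ), (1 : ℝ)) t :=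
    ((hasDerivAt_id t).sub_const τ).prodMk (hasDerivAt_id t)
  simpa [Function.comp_def] using HasFDerivAt.comp_hasDerivAt (f := fun u : ℝ => (u - τ, u)) t
    (integral_hasFDerivAt hf hmeas_a hmeas_b ha hb) hwindow

theorem ContinuousOn.hasDerivAt_integral_sub_const_self {f : ℝ → E} {a τ t : ℝ}
    (hf : ContinuousOn f (Ici a)) (ha : a < t - τ) (ht : a < t) :
    HasDerivAt (fun u => ∫ s in (u - τ)..u, f s) (f t - f (t - τ)) t := by
  have hf_Ioi : ContinuousOn f (Ioi a) := hf.mono Ioi_subset_Ici_self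
  refine intervalIntegral.hasDerivAt_integral_sub_const_self
    (hf.mono ?_).intervalIntegrable
    (hf_Ioi.stronglyMeasurableAtFilter isOpen_Ioi _ ha)
    (hf_Ioi.stronglyMeasurableAtFilter isOpen_Ioi _ ht)
    (hf_Ioi.continuousAt (Ioi_mem_nhds ha)) (hf_Ioi.continuousAt (Ioi_mem_nhds ht))
  exact fun s hs => (le_min ha.le ht.le).trans hs.1

theorem stmt_7_general (γ μ κ τ : ℝ) (hτ : 0 < τ)
    (x : ℝ → ℝ)
    (hx_cont : ContinuousOn x (Set.Ici (-τ)))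
    (hx_ode : ∀ t > (0 : ℝ), HasDerivAt x
      (γ * x (t - τ) * Real.exp (-μ * τ - κ * ∫ s in (t - τ)..t, x s)
        - μ * x t - κ * (x t) ^ 2) t) :
    ∀ t > (0 : ℝ), HasDerivAt
      (fun u => γ * Real.exp (-μ * τ - κ * ∫ s in (u - τ)..u, x s) - μ - κ * x u)
      (-(κ * x t) *
        (γ * Real.exp (-μ * τ - κ * ∫ s in (t - τ)..t, x s) - μ - κ * x t)) t := by
  intro t ht
  have hwindow : HasDerivAt (fun u => ∫ s in (u - τ)..u, x s) (x t - x (t - τ)) t :=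
    hx_cont.hasDerivAt_integral_sub_const_self (by linarith) (by linarith)
  have hexp := (((hwindow.const_mul κ).const_sub (-μ * τ)).exp).const_mul γ
  -- the delayed terms `x (t - τ)` coming from the window and from the equation cancel
  exact ((hexp.sub_const μ).sub ((hx_ode t ht).const_mul κ)).congr_deriv (by ring)

/-- Along any solution of the mixed alternative logistic DDE, the Lyapunov-type function
`Y(t) = γ e^{-μτ - κ∫_{t-τ}^t x} - μ - κ x(t)` satisfies `Y'(t) = -κ x(t) Y(t)` for `t > 0`. -/
theorem stmt_7 (γ μ κ τ : ℝ) (hγ : 0 < γ) (hμ : 0 < μ) (hκ : 0 < κ) (hτ : 0 < τ)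
    (x : ℝ → ℝ)
    (hx_cont : ContinuousOn x (Set.Ici (-τ)))
    (hx_ode : ∀ t > (0 : ℝ), HasDerivAt x
      (γ * x (t - τ) * Real.exp (-μ * τ - κ * ∫ s in (t - τ)..t, x s)
        - μ * x t - κ * (x t) ^ 2) t) :
    ∀ t > (0 : ℝ), HasDerivAt
      (fun u => γ * Real.exp (-μ * τ - κ * ∫ s in (u - τ)..u, x s) - μ - κ * x u)
      (-(κ * x t) *
        (γ * Real.exp (-μ * τ - κ * ∫ s in (t - τ)..t, x s) - μ - κ * x t)) t :=
  stmt_7_general γ μ κ τ hτ x hx_cont hx_ode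
end

section
/- Let μ, κ, τ > 0 and let x : [−τ, ∞) → ℝ be continuous, positive, differentiable on (0, ∞), and satisfy x'(t) = (μ + κ·x(t))·(x(t−τ) − x(t)) for all t > 0. Define A_n = max_{s∈[0,τ]} x(nτ + s) for n = 0, 1, 2, …. Then A_{n+1} ≤ A_n for every n, i.e., the sequence of windowed maxima is nonincreasing. -/
/-!
Let `t₀` maximize `x` over two consecutive windows `[a, a + 2τ]`. If `t₀` lay in the second
window with `x t₀` above the maximum of the first, then `x (t₀ - τ) < x t₀`, so the positive
feedback coefficient makes `x' t₀ < 0`; but a maximum approached from the left forces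
`x' t₀ ≥ 0`.
-/

open Set

theorem HasDerivAt.nonneg_of_isMaxOn_Icc {f : ℝ → ℝ} {f' a b : ℝ} (hab : a < b)
    (hf : HasDerivAt f f' b) (hmax : IsMaxOn f (Icc a b) b) : 0 ≤ f' := by
  have hcone : a - b ∈ posTangentConeAt (Icc a b) b :=
    sub_mem_posTangentConeAt_of_segment_subset (segment_symm ℝ b a ▸ segment_subset_Icc hab.le)
  have hleft := hmax.localize.hasFDerivWithinAt_nonpos hf.hasFDerivAt.hasFDerivWithinAt hcone
  simp only [ContinuousLinearMap.toSpanSingleton_apply, smul_eq_mul] at hleft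
  exact nonneg_of_mul_nonpos_right hleft (sub_neg.2 hab)

theorem image_comp_const_add_Icc_zero (x : ℝ → ℝ) (c τ : ℝ) :
    (fun s => x (c + s)) '' Icc 0 τ = x '' Icc c (c + τ) := by
  rw [show Icc c (c + τ) = (c + ·) '' Icc 0 τ by rw [image_const_add_Icc, add_zero], image_image]

section DelayedFeedback

variable {x g : ℝ → ℝ} {a τ : ℝ}

theorem le_sSup_image_Icc_of_delayed_feedback (hτ : 0 ≤ τ)
    (hx : ContinuousOn x (Icc a (a + τ + τ)))
    (hg : ∀ t ∈ Ioc (a + τ) (a + τ + τ), 0 < g t)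
    (hode : ∀ t ∈ Ioc (a + τ) (a + τ + τ), HasDerivAt x (g t * (x (t - τ) - x t)) t) :
    ∀ t ∈ Icc a (a + τ + τ), x t ≤ sSup (x '' Icc a (a + τ)) := by
  have hbdd : BddAbove (x '' Icc a (a + τ)) :=
    (isCompact_Icc.image_of_continuousOn (hx.mono (Icc_subset_Icc le_rfl (by linarith)))).bddAbove
  obtain ⟨t₀, ht₀, hmax⟩ := isCompact_Icc.exists_isMaxOn
    (nonempty_Icc.2 (by linarith : a ≤ a + τ + τ)) hx
  suffices x t₀ ≤ sSup (x '' Icc a (a + τ)) from fun t ht => (hmax ht).trans this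
  rcases le_or_gt t₀ (a + τ) with hfirst | hsecond
  · exact le_csSup hbdd (mem_image_of_mem x ⟨ht₀.1, hfirst⟩)
  by_contra! hbig
  have ht₀' : t₀ ∈ Ioc (a + τ) (a + τ + τ) := ⟨hsecond, ht₀.2⟩
  have hdelay : x (t₀ - τ) < x t₀ :=
    (le_csSup hbdd (mem_image_of_mem x ⟨by linarith, by linarith [ht₀.2]⟩)).trans_lt hbig
  have hderiv_nonneg := (hode t₀ ht₀').nonneg_of_isMaxOn_Icc hsecond
    (hmax.on_subset (Icc_subset_Icc (by linarith) ht₀.2))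
  have hderiv_neg : g t₀ * (x (t₀ - τ) - x t₀) < 0 :=
    mul_neg_of_pos_of_neg (hg t₀ ht₀') (sub_neg.2 hdelay)
  linarith

theorem sSup_image_Icc_add_le_of_delayed_feedback (hτ : 0 ≤ τ)
    (hx : ContinuousOn x (Icc a (a + τ + τ)))
    (hg : ∀ t ∈ Ioc (a + τ) (a + τ + τ), 0 < g t)
    (hode : ∀ t ∈ Ioc (a + τ) (a + τ + τ), HasDerivAt x (g t * (x (t - τ) - x t)) t) :
    sSup (x '' Icc (a + τ) (a + τ + τ)) ≤ sSup (x '' Icc a (a + τ)) := by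
  refine csSup_le ((nonempty_Icc.2 (by linarith)).image x) ?_
  rintro _ ⟨t, ht, rfl⟩
  exact le_sSup_image_Icc_of_delayed_feedback hτ hx hg hode t ⟨by linarith [ht.1], ht.2⟩

end DelayedFeedback

/-- For a positive solution of the limiting equation `x'(t) = (μ + κ x(t))(x(t-τ) - x(t))`,
the sequence of windowed maxima `A_n = max_{s ∈ [0,τ]} x(nτ + s)` is nonincreasing. -/
theorem stmt_8 (μ κ τ : ℝ) (hμ : 0 < μ) (hκ : 0 < κ) (hτ : 0 < τ)
    (x : ℝ → ℝ)
    (hx_cont : ContinuousOn x (Set.Ici (-τ)))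
    (hx_pos : ∀ t, -τ ≤ t → 0 < x t)
    (hx_ode : ∀ t > (0 : ℝ), HasDerivAt x ((μ + κ * x t) * (x (t - τ) - x t)) t) :
    ∀ n : ℕ,
      sSup ((fun s => x (((n : ℝ) + 1) * τ + s)) '' Set.Icc (0 : ℝ) τ) ≤
      sSup ((fun s => x ((n : ℝ) * τ + s)) '' Set.Icc (0 : ℝ) τ) := by
  intro n
  have ha : 0 ≤ (n : ℝ) * τ := by positivity
  rw [image_comp_const_add_Icc_zero, image_comp_const_add_Icc_zero,
    show ((n : ℝ) + 1) * τ = n * τ + τ by ring]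
  refine sSup_image_Icc_add_le_of_delayed_feedback (g := fun t => μ + κ * x t) hτ.le
    (hx_cont.mono fun t ht => by simp only [mem_Ici]; linarith [ht.1]) ?_
    fun t ht => hx_ode t (by linarith [ht.1])
  intro t ht
  have := hx_pos t (by linarith [ht.1])
  positivity
end

section
/- Let γ, μ, κ, τ > 0 with γ·e^{−μτ} > μ, and let x* > 0 be the unique positive root of γ·e^{−τ(μ+κx)} = μ + κx. Let x : [−τ, ∞) → ℝ be continuous, positive, bounded, differentiable on (0, ∞), satisfying x'(t) = (μ + κ·x(t))·(x(t−τ) − x(t)) for all t > 0 together with the integral relation κ·x(t) = γ·exp(−μτ − κ∫_{t−τ}^{t} x(s) ds) − μ for all t ≥ 0. Then x(t) → x* as t → ∞. -/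
/-!
Put `a = μ + κ x*`, so that `γ e^{-aτ} = a`, and `v t = exp (∫₀ᵗ (μ + κ x) - a t)`. The integral
relation then says exactly `(μ + κ x t) v t = a v (t - τ)`, so `v` solves the linear delay equation
`v' = a (v (t - τ) - v)`. This equation conserves `v t + a ∫_{t-τ}^t v`, and variation of constants
shows that a solution of zero energy with values in `[-K, K]` on a window of length `τ` lies in
`[-θK, θK]` one delay later, where `θ = 1 - (1 + aτ) e^{-aτ} < 1`. Hence the positive solution `v`
converges to its energy divided by `1 + aτ`, so `μ + κ x t = a v (t - τ) / v t → a`.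
-/

open Real Set Filter Topology intervalIntegral

theorem Continuous.hasDerivAt_integral_window {f : ℝ → ℝ} (hf : Continuous f) (τ t : ℝ) :
    HasDerivAt (fun r => ∫ s in (r - τ)..r, f s) (f t - f (t - τ)) t := by
  have hF : ∀ r, HasDerivAt (fun r => ∫ s in (0 : ℝ)..r, f s) (f r) r := fun r =>
    (hf.integral_hasStrictDerivAt 0 r).hasDerivAt
  have hwindow : (fun r => ∫ s in (r - τ)..r, f s) =
      fun r => (∫ s in (0 : ℝ)..r, f s) - ∫ s in (0 : ℝ)..(r - τ), f s := by
    funext r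
    exact (integral_interval_sub_left (hf.intervalIntegrable _ _) (hf.intervalIntegrable _ _)).symm
  rw [hwindow]
  exact (hF t).sub (hF (t - τ)).comp_sub_const

noncomputable section

def IsDelaySolution (a τ : ℝ) (u : ℝ → ℝ) : Prop :=
  Continuous u ∧ ∀ t ≥ 0, HasDerivAt u (a * (u (t - τ) - u t)) t

def delayEnergy (a τ : ℝ) (u : ℝ → ℝ) (t : ℝ) : ℝ :=
  u t + a * ∫ s in (t - τ)..t, u s

def decayRate (a τ : ℝ) : ℝ :=
  1 - (1 + a * τ) * exp (-(a * τ))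

end

theorem decayRate_nonneg (a τ : ℝ) : 0 ≤ decayRate a τ := by
  have h := add_one_le_exp (a * τ)
  rw [decayRate, exp_neg, sub_nonneg, ← div_eq_mul_inv, div_le_one (exp_pos _)]
  linarith

theorem decayRate_lt_one {a τ : ℝ} (ha : 0 ≤ a) (hτ : 0 ≤ τ) : decayRate a τ < 1 := by
  have : 0 < (1 + a * τ) * exp (-(a * τ)) := by positivity
  rw [decayRate]
  linarith

section DelayEquation

variable {a τ : ℝ} {u : ℝ → ℝ}

theorem delayEnergy_const_add_mul (hu : Continuous u) (K m t : ℝ) :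
    delayEnergy a τ (fun s => K + m * u s) t = (1 + a * τ) * K + m * delayEnergy a τ u t := by
  simp only [delayEnergy]
  rw [integral_add (f := fun _ => K) (g := fun s => m * u s) intervalIntegrable_const
      ((continuous_const.mul hu).intervalIntegrable _ _),
    integral_const, integral_const_mul, smul_eq_mul]
  ring

theorem self_le_delayEnergy (ha : 0 ≤ a) (hτ : 0 ≤ τ) {t : ℝ}
    (hnonneg : ∀ s ∈ Icc (t - τ) t, 0 ≤ u s) : u t ≤ delayEnergy a τ u t := by
  have := intervalIntegral.integral_nonneg (μ := MeasureTheory.volume) (by linarith) hnonneg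
  rw [delayEnergy]
  nlinarith

namespace IsDelaySolution

theorem const_add_mul (hu : IsDelaySolution a τ u) (K m : ℝ) :
    IsDelaySolution a τ (fun s => K + m * u s) :=
  ⟨continuous_const.add (continuous_const.mul hu.1), fun t ht =>
    (((hu.2 t ht).const_mul m).const_add K).congr_deriv (by ring)⟩

theorem delayEnergy_eq (hu : IsDelaySolution a τ u) {t : ℝ} (ht : 0 ≤ t) :
    delayEnergy a τ u t = delayEnergy a τ u 0 := by
  have hderiv : ∀ s ∈ uIcc 0 t, HasDerivAt (delayEnergy a τ u) 0 s := by
    intro s hs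
    rw [uIcc_of_le ht] at hs
    exact ((hu.2 s hs.1).add ((hu.1.hasDerivAt_integral_window τ s).const_mul a)).congr_deriv
      (by ring)
  have := integral_eq_sub_of_hasDerivAt hderiv intervalIntegrable_const
  simp only [integral_zero] at this
  linarith

theorem hasDerivAt_exp_mul (hu : IsDelaySolution a τ u) (c : ℝ) {t : ℝ} (ht : 0 ≤ t) :
    HasDerivAt (fun s => exp (a * (s - c)) * u s) (a * (exp (a * (t - c)) * u (t - τ))) t := by
  have hexp := (((hasDerivAt_id t).sub_const c).const_mul a).exp
  exact (hexp.mul (hu.2 t ht)).congr_deriv (by simp only [id]; ring)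

theorem variation_of_constants (hu : IsDelaySolution a τ u) (hτ : 0 ≤ τ) {c : ℝ} (hc : 0 ≤ c) :
    exp (a * τ) * u (c + τ) - u c = a * ∫ s in c..(c + τ), exp (a * (s - c)) * u (s - τ) := by
  have hderiv : ∀ s ∈ uIcc c (c + τ), HasDerivAt (fun s => exp (a * (s - c)) * u s)
      (a * (exp (a * (s - c)) * u (s - τ))) s := by
    intro s hs
    rw [uIcc_of_le (by linarith)] at hs
    exact hu.hasDerivAt_exp_mul c (by linarith [hs.1])
  have hcont : Continuous fun s => a * (exp (a * (s - c)) * u (s - τ)) := by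
    have := hu.1
    fun_prop
  rw [← integral_const_mul, integral_eq_sub_of_hasDerivAt hderiv (hcont.intervalIntegrable _ _)]
  rw [add_sub_cancel_left, sub_self, mul_zero, exp_zero, one_mul]

/-- Variation of constants writes `exp (a * τ) * u (c + τ)` as the energy at `c` with the integrand
weighted by `exp (a * (s - c)) ≥ 1`. -/
theorem delayEnergy_le (hu : IsDelaySolution a τ u) (ha : 0 ≤ a) (hτ : 0 ≤ τ) {c : ℝ} (hc : 0 ≤ c)
    (hnonneg : ∀ s ∈ Icc (c - τ) c, 0 ≤ u s) : delayEnergy a τ u c ≤ exp (a * τ) * u (c + τ) := by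
  have hshift : ∫ s in (c - τ)..c, u s = ∫ s in c..(c + τ), u (s - τ) := by
    rw [integral_comp_sub_right, add_sub_cancel_right]
  have hweight :
      ∫ s in c..(c + τ), u (s - τ) ≤ ∫ s in c..(c + τ), exp (a * (s - c)) * u (s - τ) := by
    have hdelayed : Continuous fun s => u (s - τ) := hu.1.comp (continuous_sub_right τ)
    refine integral_mono_on (by linarith) (hdelayed.intervalIntegrable _ _)
      (((by fun_prop : Continuous fun s => exp (a * (s - c))).mul hdelayed).intervalIntegrable _ _)
      fun s hs => ?_
    have hu_nonneg : 0 ≤ u (s - τ) := hnonneg _ ⟨by linarith [hs.1], by linarith [hs.2]⟩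
    have hexp : 1 ≤ exp (a * (s - c)) := one_le_exp (mul_nonneg ha (by linarith [hs.1]))
    nlinarith
  rw [delayEnergy, hshift]
  nlinarith [mul_le_mul_of_nonneg_left hweight ha, hu.variation_of_constants hτ hc]

/-- Follows from `delayEnergy_le` applied to `K ∓ u`, whose energy is `(1 + a * τ) * K`. -/
theorem abs_le_decayRate_mul (hu : IsDelaySolution a τ u) (ha : 0 ≤ a) (hτ : 0 ≤ τ)
    (h0 : delayEnergy a τ u 0 = 0) {c K : ℝ} (hc : 0 ≤ c) (hK : ∀ s ∈ Icc (c - τ) c, |u s| ≤ K) :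
    |u (c + τ)| ≤ decayRate a τ * K := by
  have hE : delayEnergy a τ u c = 0 := (hu.delayEnergy_eq hc).trans h0
  have hupper := (hu.const_add_mul K (-1)).delayEnergy_le ha hτ hc fun s hs => by
    linarith [le_abs_self (u s), hK s hs]
  have hlower := (hu.const_add_mul K 1).delayEnergy_le ha hτ hc fun s hs => by
    linarith [neg_abs_le (u s), hK s hs]
  rw [delayEnergy_const_add_mul hu.1, hE] at hupper hlower
  have hexp : exp (a * τ) * exp (-(a * τ)) = 1 := by rw [← exp_add, add_neg_cancel, exp_zero]
  rw [decayRate, abs_le]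
  constructor
  · linear_combination exp (-(a * τ)) * hlower + (K + u (c + τ)) * hexp
  · linear_combination exp (-(a * τ)) * hupper + (K - u (c + τ)) * hexp

theorem abs_le_decayRate_pow_mul (hu : IsDelaySolution a τ u) (ha : 0 ≤ a) (hτ : 0 ≤ τ)
    (h0 : delayEnergy a τ u 0 = 0) {K : ℝ} (hK : ∀ t ≥ 0, |u t| ≤ K) (n : ℕ) :
    ∀ t ≥ 2 * n * τ, |u t| ≤ decayRate a τ ^ n * K := by
  induction n with
  | zero => simpa using hK
  | succ n ih =>
    intro t ht
    push_cast at ht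
    have := hu.abs_le_decayRate_mul ha hτ h0 (c := t - τ) (by nlinarith) fun s hs =>
      ih s (by linarith [hs.1])
    rw [sub_add_cancel] at this
    rw [pow_succ, mul_comm _ (decayRate a τ), mul_assoc]
    exact this

theorem tendsto_zero_of_delayEnergy_eq_zero (hu : IsDelaySolution a τ u) (ha : 0 ≤ a) (hτ : 0 ≤ τ)
    (h0 : delayEnergy a τ u 0 = 0) {K : ℝ} (hK : ∀ t ≥ 0, |u t| ≤ K) :
    Tendsto u atTop (𝓝 0) := by
  have hpow : Tendsto (fun n : ℕ => decayRate a τ ^ n * K) atTop (𝓝 0) := by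
    simpa using (tendsto_pow_atTop_nhds_zero_of_lt_one (decayRate_nonneg a τ)
      (decayRate_lt_one ha hτ)).mul_const K
  rw [Metric.tendsto_atTop]
  intro ε hε
  obtain ⟨n, hn⟩ := (hpow.eventually (gt_mem_nhds hε)).exists
  refine ⟨2 * n * τ, fun t ht => ?_⟩
  rw [Real.dist_0_eq_abs]
  exact (hu.abs_le_decayRate_pow_mul ha hτ h0 hK n t ht).trans_lt hn

theorem tendsto_delayEnergy_div (hu : IsDelaySolution a τ u) (ha : 0 ≤ a) (hτ : 0 ≤ τ)
    (hnonneg : ∀ t ≥ -τ, 0 ≤ u t) :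
    Tendsto u atTop (𝓝 (delayEnergy a τ u 0 / (1 + a * τ))) := by
  set E := delayEnergy a τ u 0
  set c := E / (1 + a * τ)
  have hden : 0 < 1 + a * τ := by positivity
  have hcE : (1 + a * τ) * c = E := mul_div_cancel₀ _ hden.ne'
  have hE0 : 0 ≤ E := (hnonneg 0 (by linarith)).trans
    (self_le_delayEnergy ha hτ fun s hs => hnonneg s (by linarith [hs.1]))
  have hc : c ≤ E := div_le_self hE0 (le_add_of_nonneg_right (mul_nonneg ha hτ))
  have hc0 : 0 ≤ c := div_nonneg hE0 hden.le
  have hbound : ∀ t ≥ 0, |-c + 1 * u t| ≤ E := fun t ht => by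
    have := self_le_delayEnergy ha hτ (t := t) fun s hs => hnonneg s (by linarith [hs.1])
    rw [hu.delayEnergy_eq ht] at this
    rw [abs_le]
    constructor <;> linarith [hnonneg t (by linarith)]
  have hzero : delayEnergy a τ (fun t => -c + 1 * u t) 0 = 0 := by
    rw [delayEnergy_const_add_mul hu.1]
    linarith
  simpa using
    ((hu.const_add_mul (-c) 1).tendsto_zero_of_delayEnergy_eq_zero ha hτ hzero hbound).const_add c

end IsDelaySolution

end DelayEquation

section Feedback

variable {γ a τ : ℝ} {p : ℝ → ℝ}

theorem feedback_mul_exp_integral (hp : Continuous p) (ha : γ * exp (-(a * τ)) = a)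
    (hfb : ∀ t ≥ 0, p t = γ * exp (-∫ s in (t - τ)..t, p s)) {t : ℝ} (ht : 0 ≤ t) :
    p t * exp ((∫ s in (0 : ℝ)..t, p s) - a * t) =
      a * exp ((∫ s in (0 : ℝ)..(t - τ), p s) - a * (t - τ)) := by
  have hshift : ∀ y, a * exp y = γ * exp (-(a * τ) + y) := fun y => by
    rw [exp_add, ← mul_assoc, ha]
  rw [hfb t ht, hshift, mul_assoc, ← exp_add, ← integral_interval_sub_left
    (hp.intervalIntegrable 0 t) (hp.intervalIntegrable 0 (t - τ))]
  ring_nf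

theorem isDelaySolution_exp_integral (hp : Continuous p)
    (hpv : ∀ t ≥ 0, p t * exp ((∫ s in (0 : ℝ)..t, p s) - a * t) =
      a * exp ((∫ s in (0 : ℝ)..(t - τ), p s) - a * (t - τ))) :
    IsDelaySolution a τ fun t => exp ((∫ s in (0 : ℝ)..t, p s) - a * t) := by
  have hderiv : ∀ t, HasDerivAt (fun t => exp ((∫ s in (0 : ℝ)..t, p s) - a * t))
      (exp ((∫ s in (0 : ℝ)..t, p s) - a * t) * (p t - a)) t := fun t =>
    ((hp.integral_hasStrictDerivAt 0 t).hasDerivAt.sub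
      ((hasDerivAt_id t).const_mul a)).exp.congr_deriv (by simp)
  refine ⟨continuous_iff_continuousAt.2 fun t => (hderiv t).continuousAt, fun t ht => ?_⟩
  exact (hderiv t).congr_deriv (by beta_reduce; linear_combination hpv t ht)

theorem tendsto_of_feedback (hp : Continuous p) (hγ : 0 ≤ γ) (hτ : 0 ≤ τ)
    (ha : γ * exp (-(a * τ)) = a) (hfb : ∀ t ≥ 0, p t = γ * exp (-∫ s in (t - τ)..t, p s)) :
    Tendsto p atTop (𝓝 a) := by
  set v : ℝ → ℝ := fun t => exp ((∫ s in (0 : ℝ)..t, p s) - a * t)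
  have hpv : ∀ t ≥ 0, p t * v t = a * v (t - τ) := fun t ht =>
    feedback_mul_exp_integral hp ha hfb ht
  have hv := isDelaySolution_exp_integral hp hpv
  have ha0 : 0 ≤ a := ha ▸ by positivity
  have hlim := hv.tendsto_delayEnergy_div ha0 hτ fun t _ => (exp_pos _).le
  set c := delayEnergy a τ v 0 / (1 + a * τ)
  have hc : 0 < c := by
    have hE : v 0 ≤ delayEnergy a τ v 0 := self_le_delayEnergy ha0 hτ fun s _ => (exp_pos _).le
    have hv0 : v 0 = 1 := by simp [v]
    exact div_pos (by linarith) (by positivity)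
  have hdelayed : Tendsto (fun t => v (t - τ)) atTop (𝓝 c) :=
    hlim.comp (tendsto_atTop_add_const_right _ (-τ) tendsto_id)
  have hratio : Tendsto (fun t => a * v (t - τ) / v t) atTop (𝓝 (a * c / c)) :=
    (hdelayed.const_mul a).div hlim hc.ne'
  rw [mul_div_cancel_right₀ _ hc.ne'] at hratio
  refine hratio.congr' ((eventually_ge_atTop 0).mono fun t ht => ?_)
  rw [← hpv t ht, mul_div_cancel_right₀ _ (exp_pos _).ne']

end Feedback

theorem stmt_9_general (γ μ κ τ xs : ℝ) (hγ : 0 < γ) (hκ : 0 < κ) (hτ : 0 < τ)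
    (hxs_eq : γ * Real.exp (-τ * (μ + κ * xs)) = μ + κ * xs)
    (x : ℝ → ℝ)
    (hx_cont : ContinuousOn x (Set.Ici (-τ)))
    (hx_int : ∀ t ≥ (0 : ℝ),
      κ * x t = γ * Real.exp (-μ * τ - κ * ∫ s in (t - τ)..t, x s) - μ) :
    Filter.Tendsto x Filter.atTop (nhds xs) := by
  set y : ℝ → ℝ := fun t => x (max t (-τ))
  have hy_cont : Continuous y :=
    hx_cont.comp_continuous (continuous_id.max continuous_const) fun t => le_max_right t (-τ)
  have hy_eq : ∀ t ≥ -τ, y t = x t := fun t ht => by simp only [y, max_eq_left ht]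
  have hfb : ∀ t ≥ 0, μ + κ * y t = γ * exp (-∫ s in (t - τ)..t, (μ + κ * y s)) := by
    intro t ht
    have hwindow : ∫ s in (t - τ)..t, y s = ∫ s in (t - τ)..t, x s :=
      integral_congr fun s hs => hy_eq s (by rw [uIcc_of_le (by linarith)] at hs; linarith [hs.1])
    rw [integral_add (f := fun _ => μ) (g := fun s => κ * y s) intervalIntegrable_const
        ((continuous_const.mul hy_cont).intervalIntegrable _ _),
      integral_const, integral_const_mul, hwindow, hy_eq t (by linarith), smul_eq_mul, hx_int t ht]
    ring_nf
  have hp := tendsto_of_feedback (a := μ + κ * xs)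
    (continuous_const.add (continuous_const.mul hy_cont)) hγ.le hτ.le
    (by convert hxs_eq using 3; ring) hfb
  have hy : Tendsto y atTop (𝓝 xs) := by
    simpa [hκ.ne'] using (hp.sub_const μ).div_const κ
  exact hy.congr' ((eventually_ge_atTop (-τ)).mono hy_eq)

/-- Every positive bounded solution of the limiting system
`x'(t) = (μ + κ x(t))(x(t-τ) - x(t))` satisfying the integral relation
`κ x(t) = γ e^{-μτ - κ∫_{t-τ}^t x} - μ` converges to the positive equilibrium `x*`. -/
theorem stmt_9 (γ μ κ τ xs : ℝ) (hγ : 0 < γ) (hμ : 0 < μ) (hκ : 0 < κ) (hτ : 0 < τ)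
    (hR0 : μ < γ * Real.exp (-μ * τ))
    (hxs : 0 < xs) (hxs_eq : γ * Real.exp (-τ * (μ + κ * xs)) = μ + κ * xs)
    (x : ℝ → ℝ)
    (hx_cont : ContinuousOn x (Set.Ici (-τ)))
    (hx_pos : ∀ t, -τ ≤ t → 0 < x t)
    (hx_bdd : ∃ B : ℝ, ∀ t, -τ ≤ t → x t ≤ B)
    (hx_ode : ∀ t > (0 : ℝ), HasDerivAt x ((μ + κ * x t) * (x (t - τ) - x t)) t)
    (hx_int : ∀ t ≥ (0 : ℝ),
      κ * x t = γ * Real.exp (-μ * τ - κ * ∫ s in (t - τ)..t, x s) - μ) :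
    Filter.Tendsto x Filter.atTop (nhds xs) :=
  stmt_9_general γ μ κ τ xs hγ hκ hτ hxs_eq x hx_cont hx_int
end

section
/- For i = 1, 2 let γ_i, μ_i, κ_i, α_i > 0 and τ_i > 0, and suppose γ₁·e^{−μ₁τ₁} ≤ μ₁ (i.e., R₀⁽¹⁾ ≤ 1). Let (x₁, x₂) : [−max(τ₁,τ₂), ∞) → ℝ² be a bounded continuous positive solution, differentiable on (0, ∞), of the competition system x₁'(t) = γ₁·x₁(t−τ₁)·exp(−μ₁τ₁ − ∫_{t−τ₁}^{t}(κ₁x₁(s) + α₂x₂(s))ds) − μ₁x₁(t) − κ₁x₁²(t) − α₂x₁(t)x₂(t), x₂'(t) = γ₂·x₂(t−τ₂)·exp(−μ₂τ₂ − ∫_{t−τ₂}^{t}(κ₂x₂(s) + α₁x₁(s))ds) − μ₂x₂(t) − κ₂x₂²(t) − α₁x₁(t)x₂(t). Then x₁(t) → 0 as t → ∞. -/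
/-!
With `c = γ₁ e^{-μ₁τ₁}`, the competition integral only shrinks the birth term, so
`x₁' ≤ c x₁(t - τ₁) - μ₁ x₁ - κ₁ x₁²`. For such a delay inequality with `c ≤ μ₁` the functional
`V(t) = x₁(t) + c ∫_{t-τ₁}^t x₁ + κ₁ ∫_a^t x₁²` is nonincreasing, so `x₁²` is integrable at
infinity. Moreover `x₁' ≤ c · sup x₁`, so `x₁` cannot rise quickly: whenever `x₁(t) ≥ ε`, it stays
above `ε/2` on a window of fixed length before `t`, which integrability of `x₁²` forbids for
large `t`.
-/

open Set Filter Topology MeasureTheory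

theorem hasDerivAt_intervalIntegral_of_continuousOn_Ioi {f : ℝ → ℝ} {a : ℝ}
    (hf : ContinuousOn f (Ioi a)) {u v : ℝ → ℝ} {u' v' t : ℝ} (hu : HasDerivAt u u' t)
    (hv : HasDerivAt v v' t) (hut : a < u t) (hvt : a < v t) :
    HasDerivAt (fun s => ∫ r in u s..v s, f r) (f (v t) * v' - f (u t) * u') t := by
  have hcont : ∀ y, a < y → ContinuousAt f y := fun y hy => hf.continuousAt (Ioi_mem_nhds hy)
  have hmeas : ∀ y, a < y → StronglyMeasurableAtFilter f (𝓝 y) :=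
    fun y hy => hf.stronglyMeasurableAtFilter isOpen_Ioi y hy
  have hint : IntervalIntegrable f volume (u t) (v t) :=
    (hf.mono fun y hy => (lt_inf_iff.2 ⟨hut, hvt⟩).trans_le hy.1).intervalIntegrable
  refine ((intervalIntegral.integral_hasStrictFDerivAt hint (hmeas _ hut) (hmeas _ hvt)
    (hcont _ hut) (hcont _ hvt)).hasFDerivAt.comp_hasDerivAt t (hu.prodMk hv)).congr_deriv ?_
  simp [mul_comm]

theorem tendsto_intervalIntegral_sub_atTop {g : ℝ → ℝ} {a : ℝ} (hg : IntegrableOn g (Ioi a))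
    (δ : ℝ) : Tendsto (fun t => ∫ s in (t - δ)..t, g s) atTop (𝓝 0) := by
  have hlim := intervalIntegral_tendsto_integral_Ioi a hg tendsto_id
  have hlim' := intervalIntegral_tendsto_integral_Ioi a hg
    (tendsto_atTop_add_const_right _ (-δ) tendsto_id)
  rw [← sub_self (∫ s in Ioi a, g s)]
  refine (hlim.sub hlim').congr' ?_
  filter_upwards [eventually_ge_atTop (a + δ), eventually_ge_atTop a] with t hδ ha
  have hint : ∀ b, a ≤ b → IntervalIntegrable g volume a b := fun b hb =>
    (intervalIntegrable_iff_integrableOn_Ioc_of_le hb).2 (hg.mono_set Ioc_subset_Ioi_self)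
  simpa [sub_eq_add_neg] using
    intervalIntegral.integral_interval_sub_left (hint t ha) (hint (t - δ) (by linarith))

theorem tendsto_zero_of_integral_sq_le {f : ℝ → ℝ} {a K C : ℝ} (hnonneg : ∀ t ≥ a, 0 ≤ f t)
    (hcont : ContinuousOn f (Ici a)) (hrise : AntitoneOn (fun t => f t - K * t) (Ici a))
    (hint : ∀ T ≥ a, ∫ t in a..T, f t ^ 2 ≤ C) : Tendsto f atTop (𝓝 0) := by
  have hsq_cont : ContinuousOn (fun t => f t ^ 2) (Ici a) := hcont.pow 2
  have hsq : IntegrableOn (fun t => f t ^ 2) (Ioi a) :=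
    integrableOn_Ioi_of_intervalIntegral_norm_bounded C a
      (fun T => (hsq_cont.mono Icc_subset_Ici_self).integrableOn_Icc.mono_set Ioc_subset_Icc_self)
      tendsto_id <| by
        filter_upwards [eventually_ge_atTop a] with T hT using by simpa using hint T hT
  refine tendsto_order.2 ⟨fun l hl => ?_, fun ε hε => ?_⟩
  · filter_upwards [eventually_ge_atTop a] with t ht using hl.trans_le (hnonneg t ht)
  set δ := ε / (2 * max K 1)
  have hδ : 0 < δ := by positivity
  have hKδ : max K 1 * δ = ε / 2 := by
    have : 0 < max K 1 := lt_max_of_lt_right one_pos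
    simp only [δ]
    field_simp
  filter_upwards [eventually_ge_atTop (a + δ), (tendsto_intervalIntegral_sub_atTop hsq δ).eventually
    (gt_mem_nhds (show 0 < δ * (ε / 2) ^ 2 by positivity))] with t hta hsmall
  by_contra! hεt
  have hlow : ∀ s ∈ Icc (t - δ) t, ε / 2 ≤ f s := by
    intro s hs
    have hdecr := hrise (show a ≤ s by linarith [hs.1]) (show a ≤ t by linarith) hs.2
    have hKts : K * (t - s) ≤ ε / 2 := calc
      K * (t - s) ≤ max K 1 * (t - s) :=
        mul_le_mul_of_nonneg_right (le_max_left _ _) (by linarith [hs.2])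
      _ ≤ max K 1 * δ := mul_le_mul_of_nonneg_left (by linarith [hs.1]) (by positivity)
      _ = ε / 2 := hKδ
    simp only at hdecr
    rw [mul_sub] at hKts
    linarith
  have hbig : δ * (ε / 2) ^ 2 ≤ ∫ s in (t - δ)..t, f s ^ 2 := calc
    δ * (ε / 2) ^ 2 = ∫ _ in (t - δ)..t, (ε / 2) ^ 2 := by simp
    _ ≤ ∫ s in (t - δ)..t, f s ^ 2 :=
      intervalIntegral.integral_mono_on (by linarith) intervalIntegrable_const
        ((hsq_cont.mono fun s hs => mem_Ici.2 (by linarith [hs.1])).intervalIntegrable_of_Icc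
          (by linarith))
        fun s hs => pow_le_pow_left₀ (by positivity) (hlow s hs) 2
  linarith

theorem antitoneOn_Ioi_of_hasDerivAt_nonpos {f f' : ℝ → ℝ} {a : ℝ}
    (hf : ∀ t > a, HasDerivAt f (f' t) t) (hf' : ∀ t > a, f' t ≤ 0) : AntitoneOn f (Ioi a) :=
  antitoneOn_of_hasDerivWithinAt_nonpos (convex_Ioi a)
    (fun t ht => (hf t ht).continuousAt.continuousWithinAt)
    (fun t ht => by rw [interior_Ioi] at ht ⊢; exact (hf t ht).hasDerivWithinAt)
    (fun t ht => by rw [interior_Ioi] at ht; exact hf' t ht)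

noncomputable def delayLyapunov (x : ℝ → ℝ) (c κ τ a t : ℝ) : ℝ :=
  x t + c * (∫ s in (t - τ)..t, x s) + κ * ∫ s in a..t, x s ^ 2

section DelayInequality

variable {x : ℝ → ℝ} {a b c μ κ τ : ℝ}

theorem hasDerivAt_delayLyapunov (hτ : 0 ≤ τ) (hdiff : ∀ t > 0, DifferentiableAt ℝ x t)
    (ha : 0 < a) {t : ℝ} (ht : τ < t) :
    HasDerivAt (delayLyapunov x c κ τ a) (deriv x t + c * (x t - x (t - τ)) + κ * x t ^ 2) t := by
  have hcont : ContinuousOn x (Ioi 0) := fun t ht => (hdiff t ht).continuousAt.continuousWithinAt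
  have hdelay := hasDerivAt_intervalIntegral_of_continuousOn_Ioi hcont
    ((hasDerivAt_id' t).sub_const τ) (hasDerivAt_id' t) (sub_pos.2 ht) (hτ.trans_lt ht)
  have hsq := hasDerivAt_intervalIntegral_of_continuousOn_Ioi (hcont.pow 2)
    (hasDerivAt_const t a) (hasDerivAt_id' t) ha (hτ.trans_lt ht)
  refine (((hdiff t (by linarith)).hasDerivAt.add (hdelay.const_mul c)).add
    (hsq.const_mul κ)).congr_deriv ?_
  simp

theorem antitoneOn_delayLyapunov (hτ : 0 ≤ τ) (hcμ : c ≤ μ)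
    (hdiff : ∀ t > 0, DifferentiableAt ℝ x t) (hnonneg : ∀ t > 0, 0 ≤ x t)
    (hle : ∀ t > τ, deriv x t ≤ c * x (t - τ) - μ * x t - κ * x t ^ 2) (ha : 0 < a) :
    AntitoneOn (delayLyapunov x c κ τ a) (Ioi τ) :=
  antitoneOn_Ioi_of_hasDerivAt_nonpos (fun t ht => hasDerivAt_delayLyapunov hτ hdiff ha ht)
    fun t ht => by linarith [hle t ht, mul_le_mul_of_nonneg_right hcμ (hnonneg t (by linarith))]

theorem antitoneOn_sub_mul_of_delay (hτ : 0 ≤ τ) (hc : 0 ≤ c) (hcμ : c ≤ μ) (hκ : 0 ≤ κ)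
    (hdiff : ∀ t > 0, DifferentiableAt ℝ x t) (hnonneg : ∀ t > 0, 0 ≤ x t)
    (hb : ∀ t > 0, x t ≤ b)
    (hle : ∀ t > τ, deriv x t ≤ c * x (t - τ) - μ * x t - κ * x t ^ 2) :
    AntitoneOn (fun t => x t - c * b * t) (Ioi τ) :=
  antitoneOn_Ioi_of_hasDerivAt_nonpos (f' := fun t => deriv x t - c * b)
    (fun t ht => ((hdiff t (by linarith)).hasDerivAt.sub
      ((hasDerivAt_id t).const_mul (c * b))).congr_deriv (by simp))
    fun t ht => by
      have hxt := hnonneg t (by linarith)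
      linarith [hle t ht, mul_le_mul_of_nonneg_left (hb (t - τ) (by linarith)) hc,
        mul_nonneg (hc.trans hcμ) hxt, mul_nonneg hκ (sq_nonneg (x t))]

theorem integral_sq_le_of_delay (hτ : 0 ≤ τ) (hc : 0 ≤ c) (hcμ : c ≤ μ) (hκ : 0 < κ)
    (hdiff : ∀ t > 0, DifferentiableAt ℝ x t) (hnonneg : ∀ t > 0, 0 ≤ x t)
    (hle : ∀ t > τ, deriv x t ≤ c * x (t - τ) - μ * x t - κ * x t ^ 2) (ha : τ < a) {T : ℝ}
    (hT : a ≤ T) : ∫ s in a..T, x s ^ 2 ≤ delayLyapunov x c κ τ a a / κ := by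
  have hdecr := antitoneOn_delayLyapunov hτ hcμ hdiff hnonneg hle (hτ.trans_lt ha) ha
    (ha.trans_le hT) hT
  have hdelay : 0 ≤ ∫ s in (T - τ)..T, x s :=
    intervalIntegral.integral_nonneg (by linarith) fun s hs => hnonneg s (by linarith [hs.1])
  rw [le_div_iff₀' hκ]
  unfold delayLyapunov at hdecr ⊢
  linarith [hnonneg T (by linarith), mul_nonneg hc hdelay]

theorem tendsto_zero_of_delay_ineq (hτ : 0 ≤ τ) (hc : 0 ≤ c) (hcμ : c ≤ μ) (hκ : 0 < κ)
    (hdiff : ∀ t > 0, DifferentiableAt ℝ x t) (hnonneg : ∀ t > 0, 0 ≤ x t)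
    (hb : ∀ t > 0, x t ≤ b)
    (hle : ∀ t > τ, deriv x t ≤ c * x (t - τ) - μ * x t - κ * x t ^ 2) :
    Tendsto x atTop (𝓝 0) :=
  tendsto_zero_of_integral_sq_le (a := τ + 1) (fun t ht => hnonneg t (by linarith))
    (fun t ht => (hdiff t (by linarith [mem_Ici.1 ht])).continuousAt.continuousWithinAt)
    ((antitoneOn_sub_mul_of_delay hτ hc hcμ hκ.le hdiff hnonneg hb hle).mono
      (Ici_subset_Ioi.2 (lt_add_one τ)))
    fun T hT => integral_sq_le_of_delay hτ hc hcμ hκ hdiff hnonneg hle (by linarith) hT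

end DelayInequality

theorem stmt_14_general (γ₁ μ₁ κ₁ τ₁ α₂ τ₂ : ℝ)
    (hγ₁ : 0 < γ₁) (hκ₁ : 0 < κ₁) (hτ₁ : 0 < τ₁)
    (hα₂ : 0 < α₂)
    (hR1 : γ₁ * Real.exp (-μ₁ * τ₁) ≤ μ₁)
    (x₁ x₂ : ℝ → ℝ)
    (hx₁_pos : ∀ t, -(max τ₁ τ₂) ≤ t → 0 < x₁ t)
    (hx₂_pos : ∀ t, -(max τ₁ τ₂) ≤ t → 0 < x₂ t)
    (hx₁_bdd : ∃ B : ℝ, ∀ t, -(max τ₁ τ₂) ≤ t → x₁ t ≤ B)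
    (hx₁_ode : ∀ t > (0 : ℝ), HasDerivAt x₁
      (γ₁ * x₁ (t - τ₁) *
          Real.exp (-μ₁ * τ₁ - ∫ s in (t - τ₁)..t, (κ₁ * x₁ s + α₂ * x₂ s))
        - μ₁ * x₁ t - κ₁ * (x₁ t) ^ 2 - α₂ * x₁ t * x₂ t) t) :
    Filter.Tendsto x₁ Filter.atTop (nhds 0) := by
  obtain ⟨B, hB⟩ := hx₁_bdd
  have hdom : ∀ t ≥ 0, -(max τ₁ τ₂) ≤ t :=
    fun t ht => (neg_nonpos.2 (hτ₁.le.trans (le_max_left _ _))).trans ht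
  refine tendsto_zero_of_delay_ineq (b := B) hτ₁.le (by positivity) hR1 hκ₁
    (fun t ht => (hx₁_ode t ht).differentiableAt) (fun t ht => (hx₁_pos t (hdom t ht.le)).le)
    (fun t ht => hB t (hdom t ht.le)) fun t ht => ?_
  have hx₁_delay := hx₁_pos (t - τ₁) (hdom _ (by linarith))
  have hcompetition : 0 ≤ ∫ s in (t - τ₁)..t, (κ₁ * x₁ s + α₂ * x₂ s) :=
    intervalIntegral.integral_nonneg (by linarith) fun s hs =>
      have hs₀ := hdom s (by linarith [hs.1])
      add_nonneg (mul_nonneg hκ₁.le (hx₁_pos s hs₀).le) (mul_nonneg hα₂.le (hx₂_pos s hs₀).le)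
  have hbirth := mul_le_mul_of_nonneg_left
    (Real.exp_le_exp.2 (sub_le_self (-μ₁ * τ₁) hcompetition)) (mul_pos hγ₁ hx₁_delay).le
  have ht₀ := hdom t (by linarith)
  rw [(hx₁_ode t (by linarith)).deriv]
  linarith [mul_pos (mul_pos hα₂ (hx₁_pos t ht₀)) (hx₂_pos t ht₀)]

/-- In the two-species competition delay model, if `R₀⁽¹⁾ = γ₁e^{-μ₁τ₁}/μ₁ ≤ 1`,
then the first species dies out: `x₁(t) → 0` as `t → ∞`. -/
theorem stmt_14 (γ₁ μ₁ κ₁ α₁ τ₁ γ₂ μ₂ κ₂ α₂ τ₂ : ℝ)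
    (hγ₁ : 0 < γ₁) (hμ₁ : 0 < μ₁) (hκ₁ : 0 < κ₁) (hα₁ : 0 < α₁) (hτ₁ : 0 < τ₁)
    (hγ₂ : 0 < γ₂) (hμ₂ : 0 < μ₂) (hκ₂ : 0 < κ₂) (hα₂ : 0 < α₂) (hτ₂ : 0 < τ₂)
    (hR1 : γ₁ * Real.exp (-μ₁ * τ₁) ≤ μ₁)
    (x₁ x₂ : ℝ → ℝ)
    (hx₁_cont : ContinuousOn x₁ (Set.Ici (-(max τ₁ τ₂))))
    (hx₂_cont : ContinuousOn x₂ (Set.Ici (-(max τ₁ τ₂))))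
    (hx₁_pos : ∀ t, -(max τ₁ τ₂) ≤ t → 0 < x₁ t)
    (hx₂_pos : ∀ t, -(max τ₁ τ₂) ≤ t → 0 < x₂ t)
    (hx₁_bdd : ∃ B : ℝ, ∀ t, -(max τ₁ τ₂) ≤ t → x₁ t ≤ B)
    (hx₂_bdd : ∃ B : ℝ, ∀ t, -(max τ₁ τ₂) ≤ t → x₂ t ≤ B)
    (hx₁_ode : ∀ t > (0 : ℝ), HasDerivAt x₁
      (γ₁ * x₁ (t - τ₁) *
          Real.exp (-μ₁ * τ₁ - ∫ s in (t - τ₁)..t, (κ₁ * x₁ s + α₂ * x₂ s))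
        - μ₁ * x₁ t - κ₁ * (x₁ t) ^ 2 - α₂ * x₁ t * x₂ t) t)
    (hx₂_ode : ∀ t > (0 : ℝ), HasDerivAt x₂
      (γ₂ * x₂ (t - τ₂) *
          Real.exp (-μ₂ * τ₂ - ∫ s in (t - τ₂)..t, (κ₂ * x₂ s + α₁ * x₁ s))
        - μ₂ * x₂ t - κ₂ * (x₂ t) ^ 2 - α₁ * x₁ t * x₂ t) t) :
    Filter.Tendsto x₁ Filter.atTop (nhds 0) :=
  stmt_14_general γ₁ μ₁ κ₁ τ₁ α₂ τ₂ hγ₁ hκ₁ hτ₁ hα₂ hR1 x₁ x₂ hx₁_pos hx₂_pos hx₁_bdd hx₁_ode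
end

section
/- Let γ > μ > 0 and κ > 0. For τ ≥ 0 with γ·e^{−μτ} > μ, let x*(τ) denote the unique positive root of γ·e^{−τ(μ + κx)} = μ + κx. Then x*(τ) is strictly decreasing in τ: if 0 ≤ τ₁ < τ₂ and γ·e^{−μτ₂} > μ, then x*(τ₁) > x*(τ₂). -/
/-! Writing `a = μ + κx`, the equilibrium equation `γ e^{-τa} = a` reads `a e^{τa} = γ`.
For `τ ≥ 0` the map `a ↦ a e^{τa}` is strictly increasing on `a ≥ 0`, and for fixed `a > 0`
it is strictly increasing in `τ`. Hence a longer delay forces a smaller root `a`, i.e. a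
smaller `x`. -/

open Real Set

lemma mul_exp_mul_eq_of_mul_exp_neg_mul_eq {γ τ a : ℝ} (h : γ * exp (-τ * a) = a) :
    a * exp (τ * a) = γ := by
  calc a * exp (τ * a) = γ * exp (-τ * a) * exp (τ * a) := by rw [h]
    _ = γ := by rw [mul_assoc, ← exp_add, neg_mul, neg_add_cancel, exp_zero, mul_one]

lemma strictMonoOn_mul_exp_mul {τ : ℝ} (hτ : 0 ≤ τ) :
    StrictMonoOn (fun a => a * exp (τ * a)) (Ici 0) := by
  intro a ha b _ hab
  calc a * exp (τ * a) ≤ a * exp (τ * b) := by gcongr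
    _ < b * exp (τ * b) := by gcongr

lemma mul_exp_mul_lt_mul_exp_mul {a τ₁ τ₂ : ℝ} (ha : 0 < a) (hτ : τ₁ < τ₂) :
    a * exp (τ₁ * a) < a * exp (τ₂ * a) := by
  gcongr

theorem stmt_17_general (γ μ κ : ℝ) (hμ : 0 < μ) (hκ : 0 < κ)
    (τ₁ τ₂ x₁ x₂ : ℝ) (hτ₁ : 0 ≤ τ₁) (hτ : τ₁ < τ₂)
    (hx₁ : 0 < x₁) (hx₁_eq : γ * Real.exp (-τ₁ * (μ + κ * x₁)) = μ + κ * x₁)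
    (hx₂ : 0 < x₂) (hx₂_eq : γ * Real.exp (-τ₂ * (μ + κ * x₂)) = μ + κ * x₂) :
    x₂ < x₁ := by
  set a₁ := μ + κ * x₁
  set a₂ := μ + κ * x₂
  have ha₁ : 0 < a₁ := by positivity
  have ha₂ : 0 < a₂ := by positivity
  have hlt : a₂ * exp (τ₂ * a₂) < a₁ * exp (τ₂ * a₁) := by
    rw [mul_exp_mul_eq_of_mul_exp_neg_mul_eq hx₂_eq,
      ← mul_exp_mul_eq_of_mul_exp_neg_mul_eq hx₁_eq]
    exact mul_exp_mul_lt_mul_exp_mul ha₁ hτ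
  have ha : a₂ < a₁ :=
    (strictMonoOn_mul_exp_mul (hτ₁.trans hτ.le)).lt_iff_lt ha₂.le ha₁.le |>.mp hlt
  exact lt_of_mul_lt_mul_left (a := κ) (by linarith) hκ.le

/-- The delay reduced carrying capacity `x*(τ)`, the positive root of
`γ e^{-τ(μ+κx)} = μ+κx`, is strictly decreasing in the delay `τ`. -/
theorem stmt_17 (γ μ κ : ℝ) (hγμ : μ < γ) (hμ : 0 < μ) (hκ : 0 < κ)
    (τ₁ τ₂ x₁ x₂ : ℝ) (hτ₁ : 0 ≤ τ₁) (hτ : τ₁ < τ₂)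
    (hR2 : μ < γ * Real.exp (-μ * τ₂))
    (hx₁ : 0 < x₁) (hx₁_eq : γ * Real.exp (-τ₁ * (μ + κ * x₁)) = μ + κ * x₁)
    (hx₂ : 0 < x₂) (hx₂_eq : γ * Real.exp (-τ₂ * (μ + κ * x₂)) = μ + κ * x₂) :
    x₂ < x₁ :=
  stmt_17_general γ μ κ hμ hκ τ₁ τ₂ x₁ x₂ hτ₁ hτ hx₁ hx₁_eq hx₂ hx₂_eq
end

section
/- Let γ₀ > μ > 0 and c > 0, and let τ_H > 0 satisfy γ₀·(1 + cτ_H)·e^{−μτ_H} = μ with γ₀(1 + cτ)e^{−μτ} > μ for τ ∈ [0, τ_H). Let x* : [0, τ_H] → ℝ be a continuous function with x*(τ) ≥ 0 and γ₀·(1 + cτ)·e^{−τ(μ + x*(τ))} = μ + x*(τ) for all τ ∈ [0, τ_H]. Then x*(0) = γ₀ − μ, x*(τ_H) = 0, and if c > γ₀ there exists τ* ∈ (0, τ_H) such that x*(τ*) ≥ x*(τ) for all τ ∈ [0, τ_H] and x*(τ*) > x*(0). -/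
/-!
At `τ = 0` the defining equation reads `γ₀ = μ + x*(0)`, and at `τ_H` it reads
`μ e^{-τ_H x*} = μ + x*`, forcing `x*(τ_H) = 0`. The growth factor `(1 + cτ)e^{-γ₀τ}` equals `1`
at `τ = 0` with slope `c - γ₀ > 0`, so it exceeds `1` for small `τ > 0`; there `x*(τ) ≤ γ₀ - μ`
would make the left side of the defining equation larger than the right. Hence the maximum of
`x*` over `[0, τ_H]`, which exists by compactness, exceeds both endpoint values and is attained
in the interior.
-/

open Filter Topology Set Real

theorem HasDerivAt.eventually_lt_nhdsGT {f : ℝ → ℝ} {f' x : ℝ} (hf : HasDerivAt f f' x)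
    (hf' : 0 < f') : ∀ᶠ y in 𝓝[>] x, f x < f y := by
  filter_upwards [(hf.tendsto_slope.mono_left (nhdsGT_le_nhdsNE x)).eventually
    (eventually_gt_nhds hf'), self_mem_nhdsWithin] with y hslope hy
  exact (slope_pos_iff_of_le (le_of_lt hy)).mp hslope

theorem hasDerivAt_one_add_mul_mul_exp (c γ : ℝ) :
    HasDerivAt (fun τ ↦ (1 + c * τ) * exp (-τ * γ)) (c - γ) 0 :=
  ((((hasDerivAt_id' 0).const_mul c).const_add 1).fun_mul
    ((hasDerivAt_neg' 0).mul_const γ).exp).congr_deriv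
    (by simp only [neg_zero, zero_mul, exp_zero, mul_zero, add_zero]; ring)

theorem eventually_one_lt_one_add_mul_mul_exp {c γ : ℝ} (hγc : γ < c) :
    ∀ᶠ τ in 𝓝[>] 0, 1 < (1 + c * τ) * exp (-τ * γ) := by
  simpa using (hasDerivAt_one_add_mul_mul_exp c γ).eventually_lt_nhdsGT (sub_pos.mpr hγc)

theorem lt_of_mul_mul_exp_eq {γ g τ y : ℝ} (hγ : 0 < γ) (hτ : 0 ≤ τ)
    (hg : 1 < g * exp (-τ * γ)) (h : γ * g * exp (-τ * y) = y) : γ < y := by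
  by_contra! hy
  have hg_pos : 0 < g := pos_of_mul_pos_left (one_pos.trans hg) (exp_pos _).le
  have hexp : exp (-τ * γ) ≤ exp (-τ * y) := exp_le_exp.mpr (by nlinarith)
  refine hy.not_gt ?_
  calc γ < γ * (g * exp (-τ * γ)) := lt_mul_of_one_lt_right hγ hg
    _ ≤ γ * (g * exp (-τ * y)) := by gcongr
    _ = y := by rw [← mul_assoc, h]

theorem eq_zero_of_mul_exp_eq {a μ τ x : ℝ} (hμ : 0 ≤ μ) (hτ : 0 ≤ τ) (hx : 0 ≤ x)
    (ha : a * exp (-μ * τ) = μ) (h : a * exp (-τ * (μ + x)) = μ + x) : x = 0 := by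
  have hsplit : a * exp (-τ * (μ + x)) = μ * exp (-τ * x) :=
    calc a * exp (-τ * (μ + x)) = a * exp (-μ * τ) * exp (-τ * x) := by
          rw [mul_assoc, ← exp_add]; ring_nf
      _ = μ * exp (-τ * x) := by rw [ha]
  have hle : μ * exp (-τ * x) ≤ μ :=
    mul_le_of_le_one_right hμ (exp_le_one_iff.mpr (by nlinarith))
  linarith

theorem stmt_19_general (γ₀ μ c τH : ℝ) (hγμ : μ < γ₀) (hμ : 0 < μ) (hτH : 0 < τH)
    (hτH_eq : γ₀ * (1 + c * τH) * Real.exp (-μ * τH) = μ)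
    (xs : ℝ → ℝ)
    (hxs_cont : ContinuousOn xs (Set.Icc 0 τH))
    (hxs_nonneg : ∀ τ ∈ Set.Icc (0 : ℝ) τH, 0 ≤ xs τ)
    (hxs_eq : ∀ τ ∈ Set.Icc (0 : ℝ) τH,
      γ₀ * (1 + c * τ) * Real.exp (-τ * (μ + xs τ)) = μ + xs τ) :
    xs 0 = γ₀ - μ ∧ xs τH = 0 ∧
      (γ₀ < c → ∃ τs ∈ Set.Ioo (0 : ℝ) τH,
        (∀ τ ∈ Set.Icc (0 : ℝ) τH, xs τ ≤ xs τs) ∧ xs 0 < xs τs) := by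
  have h_start : xs 0 = γ₀ - μ := by
    have := hxs_eq 0 (left_mem_Icc.mpr hτH.le)
    simp only [mul_zero, add_zero, mul_one, neg_zero, zero_mul, exp_zero] at this
    linarith
  have h_end : xs τH = 0 :=
    eq_zero_of_mul_exp_eq hμ.le hτH.le (hxs_nonneg τH (right_mem_Icc.mpr hτH.le)) hτH_eq
      (hxs_eq τH (right_mem_Icc.mpr hτH.le))
  refine ⟨h_start, h_end, fun hγc ↦ ?_⟩
  obtain ⟨τ₀, hgrowth, hτ₀⟩ :=
    ((eventually_one_lt_one_add_mul_mul_exp hγc).and (Ioo_mem_nhdsGT hτH)).exists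
  have hτ₀_mem : τ₀ ∈ Icc 0 τH := Ioo_subset_Icc_self hτ₀
  have h_gain : γ₀ - μ < xs τ₀ := by
    have := lt_of_mul_mul_exp_eq (hμ.trans hγμ) hτ₀.1.le hgrowth (hxs_eq τ₀ hτ₀_mem)
    linarith
  obtain ⟨τs, hτs, hmax⟩ :=
    isCompact_Icc.exists_isMaxOn (nonempty_Icc.mpr hτH.le) hxs_cont
  have h_top : γ₀ - μ < xs τs := h_gain.trans_le (hmax hτ₀_mem)
  refine ⟨τs, ⟨hτs.1.lt_of_ne ?_, hτs.2.lt_of_ne ?_⟩, fun τ hτ ↦ hmax hτ, h_start ▸ h_top⟩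
  · rintro rfl; linarith
  · rintro rfl; linarith

/-- Adaptive dynamics with the trade-off `γ(τ) = γ₀(1+cτ)`: the delay reduced carrying
capacity `x*(τ)`, defined by `γ₀(1+cτ)e^{-τ(μ+x*(τ))} = μ + x*(τ)` on `[0, τ_H]`,
satisfies `x*(0) = γ₀ - μ` and `x*(τ_H) = 0`; and if `c > γ₀` there is an interior
maximizer `τ* ∈ (0, τ_H)` with `x*(τ*) > x*(0)` (an evolutionarily stable strategy). -/
theorem stmt_19 (γ₀ μ c τH : ℝ) (hγμ : μ < γ₀) (hμ : 0 < μ) (hc : 0 < c) (hτH : 0 < τH)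
    (hτH_eq : γ₀ * (1 + c * τH) * Real.exp (-μ * τH) = μ)
    (hτH_lt : ∀ τ : ℝ, 0 ≤ τ → τ < τH → μ < γ₀ * (1 + c * τ) * Real.exp (-μ * τ))
    (xs : ℝ → ℝ)
    (hxs_cont : ContinuousOn xs (Set.Icc 0 τH))
    (hxs_nonneg : ∀ τ ∈ Set.Icc (0 : ℝ) τH, 0 ≤ xs τ)
    (hxs_eq : ∀ τ ∈ Set.Icc (0 : ℝ) τH,
      γ₀ * (1 + c * τ) * Real.exp (-τ * (μ + xs τ)) = μ + xs τ) :
    xs 0 = γ₀ - μ ∧ xs τH = 0 ∧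
      (γ₀ < c → ∃ τs ∈ Set.Ioo (0 : ℝ) τH,
        (∀ τ ∈ Set.Icc (0 : ℝ) τH, xs τ ≤ xs τs) ∧ xs 0 < xs τs) :=
  stmt_19_general γ₀ μ c τH hγμ hμ hτH hτH_eq xs hxs_cont hxs_nonneg hxs_eq
end
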